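/- arXiv:nlin/0502002 — 8 statements merged into one kernel-verified Lean document; each statement's English description precedes it below -/
import Mathlib

section
/- For every a > 0 and every n ∈ ℤ, the discrete Kac–Baker convolution of the peakon profile satisfies ∑_{m∈ℤ} exp(−a|n−m|) · exp(−a|m|) = ((e^{2a}+1)/(e^{2a}−1) + |n|) · exp(−a|n|), the series being absolutely convergent. -/
open Real Function

lemma key (a : ℝ) (ha : 0 < a) (N : ℕ) :
    Summable (fun m : ℤ => Real.exp (-a * |((N : ℤ) : ℝ) - (m : ℝ)|) * Real.exp (-a * |(m : ℝ)|)) ∧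
      ∑' m : ℤ, Real.exp (-a * |((N : ℤ) : ℝ) - (m : ℝ)|) * Real.exp (-a * |(m : ℝ)|)
        = ((Real.exp (2 * a) + 1) / (Real.exp (2 * a) - 1) + |((N : ℤ) : ℝ)|)
            * Real.exp (-a * |((N : ℤ) : ℝ)|) := by
  set r : ℝ := Real.exp (-(2 * a)) with hrdef
  have hr0 : 0 < r := Real.exp_pos _
  have hr1 : r < 1 := Real.exp_lt_one_iff.mpr (by linarith)
  have h1r : (0:ℝ) < 1 - r := by linarith
  set f : ℤ → ℝ := fun m => Real.exp (-a * (|((N : ℤ) : ℝ) - (m : ℝ)| + |(m : ℝ)|)) with hfdef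
  have hf_eq : (fun m : ℤ => Real.exp (-a * |((N : ℤ) : ℝ) - (m : ℝ)|) * Real.exp (-a * |(m : ℝ)|)) = f := by
    funext m
    rw [hfdef, ← Real.exp_add]
    ring_nf
  set g1 : ℤ → ℝ := fun m => if 0 ≤ m ∧ m ≤ (N : ℤ) then f m else 0 with hg1
  set g2 : ℤ → ℝ := fun m => if m < 0 then f m else 0 with hg2
  set g3 : ℤ → ℝ := fun m => if (N : ℤ) < m then f m else 0 with hg3
  have hsplit : f = fun m => g1 m + g2 m + g3 m := by
    funext m
    simp only [hg1, hg2, hg3]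
    split_ifs <;> (try (exfalso; omega)) <;> ring
  -- g1 : finite support
  have hzero1 : ∀ m ∉ Finset.Icc (0:ℤ) (N:ℤ), g1 m = 0 := by
    intro m hm
    simp only [Finset.mem_Icc] at hm
    simp only [hg1, if_neg (by omega : ¬(0 ≤ m ∧ m ≤ (N:ℤ)))]
  have hs1 : Summable g1 := summable_of_ne_finset_zero hzero1
  have ht1 : ∑' m, g1 m = ((N : ℝ) + 1) * Real.exp (-a * (N : ℝ)) := by
    rw [tsum_eq_sum hzero1]
    have hval : ∀ m ∈ Finset.Icc (0:ℤ) (N:ℤ), g1 m = Real.exp (-a * (N : ℝ)) := by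
      intro m hm
      simp only [Finset.mem_Icc] at hm
      simp only [hg1, if_pos hm, hfdef]
      congr 1
      have h0 : (0:ℝ) ≤ (m:ℝ) := by exact_mod_cast hm.1
      have h1 : (m:ℝ) ≤ ((N:ℤ):ℝ) := by exact_mod_cast hm.2
      rw [abs_of_nonneg (by linarith : (0:ℝ) ≤ ((N:ℤ):ℝ) - (m:ℝ)), abs_of_nonneg h0]
      push_cast
      ring
    rw [Finset.sum_congr rfl hval, Finset.sum_const]
    rw [Int.card_Icc]
    rw [show ((N:ℤ) + 1 - 0) = ((N + 1 : ℕ) : ℤ) by push_cast; ring, Int.toNat_natCast]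
    push_cast
    ring
  -- g2 : negative side
  have hi2 : Function.Injective (fun k : ℕ => (-(k+1) : ℤ)) := by
    intro x y h; dsimp at h; omega
  have hsupp2 : Function.support g2 ⊆ Set.range (fun k : ℕ => (-(k+1) : ℤ)) := by
    intro m hm
    simp only [hg2, Function.mem_support] at hm
    by_cases h : m < 0
    · exact ⟨(-m - 1).toNat, by dsimp; omega⟩
    · simp [if_neg h] at hm
  have hval2 : ∀ k : ℕ, g2 (-(k+1) : ℤ) = Real.exp (-a * ((N:ℝ) + 2)) * r ^ k := by
    intro k
    have hk : (0:ℝ) ≤ (k:ℝ) := Nat.cast_nonneg k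
    have hN : (0:ℝ) ≤ (N:ℝ) := Nat.cast_nonneg N
    simp only [hg2, if_pos (by omega : (-((k:ℤ)+1):ℤ) < 0), hfdef]
    push_cast
    rw [abs_of_nonneg (by linarith : (0:ℝ) ≤ (N:ℝ) - (-((k:ℝ)+1))),
      abs_of_nonpos (by linarith : (-((k:ℝ)+1)) ≤ 0)]
    rw [hrdef, ← Real.exp_nat_mul, ← Real.exp_add]
    congr 1
    ring
  have hsum2' : Summable (fun k : ℕ => Real.exp (-a * ((N:ℝ) + 2)) * r ^ k) :=
    (summable_geometric_of_lt_one hr0.le hr1).mul_left _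
  have hzero2 : ∀ x ∉ Set.range (fun k : ℕ => (-(k+1) : ℤ)), g2 x = 0 := by
    intro x hx
    by_contra hne
    exact hx (hsupp2 hne)
  have hs2 : Summable g2 := by
    rw [← hi2.summable_iff hzero2]
    exact hsum2'.congr fun k => (hval2 k).symm
  have ht2 : ∑' m, g2 m = Real.exp (-a * ((N:ℝ) + 2)) * (1 - r)⁻¹ := by
    rw [← hi2.tsum_eq hsupp2]
    calc ∑' k : ℕ, g2 (-(k+1) : ℤ) = ∑' k : ℕ, Real.exp (-a * ((N:ℝ) + 2)) * r ^ k :=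
          tsum_congr hval2
      _ = _ := by rw [tsum_mul_left, tsum_geometric_of_lt_one hr0.le hr1]
  -- g3 : m > N
  have hi3 : Function.Injective (fun k : ℕ => ((N:ℤ) + k + 1 : ℤ)) := by
    intro x y h; dsimp at h; omega
  have hsupp3 : Function.support g3 ⊆ Set.range (fun k : ℕ => ((N:ℤ) + k + 1 : ℤ)) := by
    intro m hm
    simp only [hg3, Function.mem_support] at hm
    by_cases h : (N:ℤ) < m
    · exact ⟨(m - N - 1).toNat, by dsimp; omega⟩
    · simp [if_neg h] at hm
  have hval3 : ∀ k : ℕ, g3 ((N:ℤ) + k + 1 : ℤ) = Real.exp (-a * ((N:ℝ) + 2)) * r ^ k := by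
    intro k
    have hk : (0:ℝ) ≤ (k:ℝ) := Nat.cast_nonneg k
    have hN : (0:ℝ) ≤ (N:ℝ) := Nat.cast_nonneg N
    simp only [hg3, if_pos (by omega : (N:ℤ) < (N:ℤ) + (k:ℤ) + 1), hfdef]
    push_cast
    rw [abs_of_nonpos (by linarith : (N:ℝ) - ((N:ℝ) + (k:ℝ) + 1) ≤ 0),
      abs_of_nonneg (by linarith : (0:ℝ) ≤ (N:ℝ) + (k:ℝ) + 1)]
    rw [hrdef, ← Real.exp_nat_mul, ← Real.exp_add]
    congr 1
    ring
  have hzero3 : ∀ x ∉ Set.range (fun k : ℕ => ((N:ℤ) + k + 1 : ℤ)), g3 x = 0 := by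
    intro x hx
    by_contra hne
    exact hx (hsupp3 hne)
  have hs3 : Summable g3 := by
    rw [← hi3.summable_iff hzero3]
    exact hsum2'.congr fun k => (hval3 k).symm
  have ht3 : ∑' m, g3 m = Real.exp (-a * ((N:ℝ) + 2)) * (1 - r)⁻¹ := by
    rw [← hi3.tsum_eq hsupp3]
    calc ∑' k : ℕ, g3 ((N:ℤ) + k + 1 : ℤ) = ∑' k : ℕ, Real.exp (-a * ((N:ℝ) + 2)) * r ^ k :=
          tsum_congr hval3
      _ = _ := by rw [tsum_mul_left, tsum_geometric_of_lt_one hr0.le hr1]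
  have hsf : Summable f := by
    rw [hsplit]
    exact (hs1.add hs2).add hs3
  refine ⟨by rw [hf_eq]; exact hsf, ?_⟩
  rw [hf_eq]
  have htf : ∑' m, f m = ((N : ℝ) + 1) * Real.exp (-a * (N : ℝ))
      + 2 * (Real.exp (-a * ((N:ℝ) + 2)) * (1 - r)⁻¹) := by
    rw [hsplit, Summable.tsum_add (hs1.add hs2) hs3, Summable.tsum_add hs1 hs2, ht1, ht2, ht3]
    ring
  rw [htf]
  -- final algebra
  have habsN : |((N:ℤ):ℝ)| = (N:ℝ) := by
    rw [abs_of_nonneg (by push_cast; positivity)]; push_cast; ring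
  rw [habsN]
  have hE2 : Real.exp (-a * ((N:ℝ) + 2)) = Real.exp (-a * (N:ℝ)) * r := by
    rw [hrdef, ← Real.exp_add]; ring_nf
  have hRr : Real.exp (2 * a) * r = 1 := by
    rw [hrdef, ← Real.exp_add]; simp
  have hRne : Real.exp (2 * a) - 1 ≠ 0 := by
    have : (1:ℝ) < Real.exp (2 * a) := by
      rw [show (1:ℝ) = Real.exp 0 by simp]
      exact Real.exp_lt_exp.mpr (by linarith)
    linarith
  have h1rne : (1:ℝ) - r ≠ 0 := by linarith
  have hrinv : r = (Real.exp (2 * a))⁻¹ := by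
    rw [hrdef, ← Real.exp_neg]
  rw [hE2, hrinv]
  have h1 : (1:ℝ) - (Real.exp (2 * a))⁻¹ ≠ 0 := by
    rw [← hrinv]; exact h1rne
  field_simp
  rw [mul_comm a 2]; field_simp; ring

/-- For every `a > 0` and `n : ℤ`, the discrete Kac–Baker convolution of the
peakon profile satisfies
`∑_{m∈ℤ} exp (-a|n-m|) exp (-a|m|) = ((e^{2a}+1)/(e^{2a}-1) + |n|) exp (-a|n|)`,
the series being absolutely convergent. -/
theorem discrete_kac_baker_convolution (a : ℝ) (ha : 0 < a) (n : ℤ) :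
    Summable (fun m : ℤ => Real.exp (-a * |(n : ℝ) - (m : ℝ)|) * Real.exp (-a * |(m : ℝ)|)) ∧
      ∑' m : ℤ, Real.exp (-a * |(n : ℝ) - (m : ℝ)|) * Real.exp (-a * |(m : ℝ)|)
        = ((Real.exp (2 * a) + 1) / (Real.exp (2 * a) - 1) + |(n : ℝ)|)
            * Real.exp (-a * |(n : ℝ)|) := by
  rcases le_or_gt 0 n with hn | hn
  · have := key a ha n.toNat
    rwa [Int.toNat_of_nonneg hn] at this
  · have hkey := key a ha (-n).toNat
    rw [Int.toNat_of_nonneg (by omega : 0 ≤ -n)] at hkey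
    have heq : ∀ m : ℤ,
        Real.exp (-a * |((-n : ℤ) : ℝ) - ((-m : ℤ) : ℝ)|) * Real.exp (-a * |((-m : ℤ) : ℝ)|)
          = Real.exp (-a * |(n : ℝ) - (m : ℝ)|) * Real.exp (-a * |(m : ℝ)|) := by
      intro m
      push_cast
      rw [show -(n:ℝ) - -(m:ℝ) = -((n:ℝ) - m) by ring, abs_neg, abs_neg]
    have hsumm : Summable (fun m : ℤ => Real.exp (-a * |(n : ℝ) - (m : ℝ)|) * Real.exp (-a * |(m : ℝ)|)) := by
      have := ((Equiv.neg ℤ).summable_iff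
        (f := fun m : ℤ => Real.exp (-a * |((-n : ℤ) : ℝ) - (m : ℝ)|) * Real.exp (-a * |(m : ℝ)|))).mpr hkey.1
      refine this.congr fun m => ?_
      simpa using heq m
    refine ⟨hsumm, ?_⟩
    have htsum : ∑' m : ℤ, Real.exp (-a * |(n : ℝ) - (m : ℝ)|) * Real.exp (-a * |(m : ℝ)|)
        = ∑' m : ℤ, Real.exp (-a * |((-n : ℤ) : ℝ) - (m : ℝ)|) * Real.exp (-a * |(m : ℝ)|) := by
      rw [← (Equiv.neg ℤ).tsum_eq
        (f := fun m : ℤ => Real.exp (-a * |((-n : ℤ) : ℝ) - (m : ℝ)|) * Real.exp (-a * |(m : ℝ)|))]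
      refine tsum_congr fun m => ?_
      simpa using (heq m).symm
    rw [htsum, hkey.2]
    congr 2 <;> push_cast <;> rw [abs_neg]
end

section
/- Let Λ = (e²+1)/(e²−1). Let u ∈ ℓ²(ℤ, ℝ) satisfy sup_n |u_n| ≤ ε for some 0 < ε < 1, and suppose ∑_{n∈ℤ} u_n² |ln(u_n²)| < ∞ (with the convention 0·ln 0 = 0). Then the Klein–Gordon energy of the static configuration u satisfies T(u) + W(u) ≥ (Λ/2 + 1/4 − (e+1)/(2(e−1)) + (1/4) ln(1/ε²)) · ‖u‖_{ℓ²}². In particular, there exists ε₀ > 0 (e.g. ε₀ = e^{−2}) such that T(u) + W(u) > 0 whenever 0 < ‖u‖_{ℓ²} ≤ ε₀, so the vacuum u = 0 is a strict local minimizer of the energy in ℓ²(ℤ, ℝ). -/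
/-- `Λ = (e²+1)/(e²−1)`. -/
noncomputable def Lam : ℝ := (Real.exp 1 ^ 2 + 1) / (Real.exp 1 ^ 2 - 1)

/-- The dispersive part of the static Klein–Gordon energy:
`T(u) = -(1/2) ∑_{(n,m)∈ℤ²} exp (-|n-m|) u_n u_m`. -/
noncomputable def Tkg (u : ℤ → ℝ) : ℝ :=
  -(1 / 2) * ∑' p : ℤ × ℤ, Real.exp (-|(p.1 : ℝ) - (p.2 : ℝ)|) * u p.1 * u p.2

/-- The on-site part of the static Klein–Gordon energy:
`W(u) = ∑_{n∈ℤ} ((Λ/2 + 1/4) u_n² − (1/4) u_n² ln (u_n²))`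
(with the convention `0 · ln 0 = 0`, which holds since `Real.log 0 = 0`). -/
noncomputable def Wkg (u : ℤ → ℝ) : ℝ :=
  ∑' n : ℤ, ((Lam / 2 + 1 / 4) * u n ^ 2 - (1 / 4) * (u n ^ 2 * Real.log (u n ^ 2)))


lemma hasSum_exp_abs : HasSum (fun k : ℤ => Real.exp (-|(k : ℝ)|))
    ((Real.exp 1 + 1) / (Real.exp 1 - 1)) := by
  have hr0 : (0:ℝ) ≤ Real.exp (-1) := (Real.exp_pos _).le
  have hr1 : Real.exp (-1) < 1 := Real.exp_lt_one_iff.mpr (by norm_num)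
  have hgeom := hasSum_geometric_of_lt_one hr0 hr1
  have h1 : HasSum (fun n : ℕ => Real.exp (-|((n : ℤ) : ℝ)|)) (1 - Real.exp (-1))⁻¹ := by
    convert hgeom using 2 with n
    rw [← Real.exp_nat_mul]
    congr 1
    push_cast
    rw [abs_of_nonneg (by positivity : (0:ℝ) ≤ (n:ℝ))]
    ring
  have h2 : HasSum (fun n : ℕ => Real.exp (-|((-((n:ℤ) + 1) : ℤ) : ℝ)|))
      (Real.exp (-1) * (1 - Real.exp (-1))⁻¹) := by
    convert (show HasSum (fun n : ℕ => Real.exp (-1) * Real.exp (-1) ^ n)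
        (Real.exp (-1) * (1 - Real.exp (-1))⁻¹) from hgeom.mul_left (Real.exp (-1))) using 2 with n
    rw [← Real.exp_nat_mul, ← Real.exp_add]
    congr 1
    push_cast
    rw [abs_neg, abs_of_nonneg (by positivity : (0:ℝ) ≤ (n:ℝ) + 1)]
    ring
  have h := HasSum.of_nat_of_neg_add_one (f := fun k : ℤ => Real.exp (-|(k : ℝ)|)) h1 h2
  convert h using 1
  have he : (1:ℝ) < Real.exp 1 := by
    have := Real.exp_one_gt_d9; linarith
  have he0 : Real.exp 1 ≠ 0 := (Real.exp_pos _).ne'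
  have he1 : Real.exp 1 - 1 ≠ 0 := by linarith
  rw [Real.exp_neg]
  rw [show (1 - (Real.exp 1)⁻¹) = (Real.exp 1 - 1) / Real.exp 1 by field_simp]
  field_simp


lemma hasSum_exp_abs_row (n : ℤ) :
    HasSum (fun m : ℤ => Real.exp (-|(n : ℝ) - (m : ℝ)|))
      ((Real.exp 1 + 1) / (Real.exp 1 - 1)) := by
  have h := (Equiv.subLeft n).hasSum_iff.mpr hasSum_exp_abs
  simp only [Function.comp_def, Equiv.subLeft_apply] at h
  convert h using 3 with m
  push_cast
  ring

lemma coef_key (x : ℝ) (h1 : x - 1 ≠ 0) (h2 : x ^ 2 - 1 ≠ 0) :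
    (x ^ 2 + 1) / (x ^ 2 - 1) / 2 + 1 / 4 - (x + 1) / (2 * (x - 1)) + (1 / 4) * (4:ℝ)
      = (5 * x ^ 2 - 4 * x - 5) / (4 * (x ^ 2 - 1)) := by
  field_simp
  ring

lemma hco (x : ℝ) : x ^ (2:ℝ) = x ^ (2:ℕ) := by
  rw [show (2:ℝ) = ((2:ℕ):ℝ) by norm_num, Real.rpow_natCast]

set_option maxHeartbeats 2000000 in
/-- Stability of the vacuum for the discrete Klein–Gordon energy: the stated
lower bound for the energy of small-amplitude configurations, and the
consequence that the vacuum `u = 0` is a strict local minimizer of the energy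
in `ℓ²(ℤ, ℝ)`. -/
theorem kg_vacuum_stability :
    (∀ ε : ℝ, 0 < ε → ε < 1 →
      ∀ u : lp (fun _ : ℤ => ℝ) 2,
        (∀ n : ℤ, |u n| ≤ ε) →
        Summable (fun n : ℤ => u n ^ 2 * |Real.log (u n ^ 2)|) →
        Tkg (fun n => u n) + Wkg (fun n => u n) ≥
          (Lam / 2 + 1 / 4 - (Real.exp 1 + 1) / (2 * (Real.exp 1 - 1))
            + (1 / 4) * Real.log (1 / ε ^ 2)) * ‖u‖ ^ 2) ∧
    ∃ ε₀ : ℝ, 0 < ε₀ ∧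
      ∀ u : lp (fun _ : ℤ => ℝ) 2,
        Summable (fun n : ℤ => u n ^ 2 * |Real.log (u n ^ 2)|) →
        0 < ‖u‖ → ‖u‖ ≤ ε₀ →
        0 < Tkg (fun n => u n) + Wkg (fun n => u n) := by
  have hmain : ∀ ε : ℝ, 0 < ε → ε < 1 →
      ∀ u : lp (fun _ : ℤ => ℝ) 2,
        (∀ n : ℤ, |u n| ≤ ε) →
        Summable (fun n : ℤ => u n ^ 2 * |Real.log (u n ^ 2)|) →
        Tkg (fun n => u n) + Wkg (fun n => u n) ≥
          (Lam / 2 + 1 / 4 - (Real.exp 1 + 1) / (2 * (Real.exp 1 - 1))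
            + (1 / 4) * Real.log (1 / ε ^ 2)) * ‖u‖ ^ 2 := by
    set C : ℝ := (Real.exp 1 + 1) / (Real.exp 1 - 1) with hC
    have he : (2:ℝ) < Real.exp 1 := by
      have := Real.exp_one_gt_d9; linarith
    have he1 : (0:ℝ) < Real.exp 1 - 1 := by linarith
    intro ε hε hε1 u hub hsum
    have hS2 : Summable (fun n : ℤ => (u n : ℝ) ^ 2) := by
      have h := (lp.memℓp u).summable (p := 2) (by norm_num)
      simp only [ENNReal.toReal_ofNat, hco, Real.norm_eq_abs, sq_abs] at h
      exact h
    have hnorm : ‖u‖ ^ 2 = ∑' n : ℤ, (u n : ℝ) ^ 2 := by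
      have h := lp.norm_rpow_eq_tsum (p := 2) (by norm_num) u
      simp only [ENNReal.toReal_ofNat, hco, Real.norm_eq_abs, sq_abs] at h
      exact h
    set S : ℝ := ∑' n : ℤ, (u n : ℝ) ^ 2 with hSdef
    set F : ℤ × ℤ → ℝ :=
      fun p => Real.exp (-|(p.1 : ℝ) - (p.2 : ℝ)|) * u p.1 * u p.2 with hF
    set G : ℤ × ℤ → ℝ :=
      fun p => Real.exp (-|(p.1 : ℝ) - (p.2 : ℝ)|) * (u p.1 : ℝ) ^ 2 with hG
    have hGnn : ∀ p, 0 ≤ G p := fun p => by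
      have := (Real.exp_pos (-|(p.1 : ℝ) - (p.2 : ℝ)|)).le
      rw [hG]
      positivity
    have hGrow : ∀ n : ℤ, HasSum (fun m : ℤ => G (n, m)) (C * (u n : ℝ) ^ 2) := by
      intro n
      simpa [hG, mul_comm] using (hasSum_exp_abs_row n).mul_right ((u n : ℝ) ^ 2)
    have htsumrow : (fun n : ℤ => ∑' m : ℤ, G (n, m)) = fun n => C * (u n : ℝ) ^ 2 :=
      funext fun n => (hGrow n).tsum_eq
    have hGsum : Summable G := by
      refine (summable_prod_of_nonneg hGnn).mpr ⟨fun n => (hGrow n).summable, ?_⟩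
      rw [htsumrow]
      exact hS2.mul_left C
    have hGtsum : ∑' p, G p = C * S := by
      rw [Summable.tsum_prod' hGsum (fun n => (hGrow n).summable), htsumrow, tsum_mul_left]
    have hGsw : Summable (fun p : ℤ × ℤ => G p.swap) := hGsum.prod_symm
    have hGswtsum : ∑' p : ℤ × ℤ, G p.swap = C * S := by
      rw [← hGtsum]
      exact ((Equiv.prodComm ℤ ℤ).tsum_eq G)
    have hbound : ∀ p : ℤ × ℤ, |F p| ≤ (G p + G p.swap) / 2 := by
      intro p
      have hexp : (0:ℝ) < Real.exp (-|(p.1 : ℝ) - (p.2 : ℝ)|) := Real.exp_pos _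
      have habs : |F p| = Real.exp (-|(p.1 : ℝ) - (p.2 : ℝ)|) * |u p.1| * |u p.2| := by
        rw [hF]
        rw [abs_mul, abs_mul, abs_of_pos hexp]
      have hsw : G p.swap = Real.exp (-|(p.1 : ℝ) - (p.2 : ℝ)|) * (u p.2 : ℝ) ^ 2 := by
        rw [hG]
        simp only [Prod.fst_swap, Prod.snd_swap]
        rw [abs_sub_comm]
      rw [habs, hsw, hG]
      have h2 : |(u p.1 : ℝ)| * |u p.2| ≤ ((u p.1 : ℝ) ^ 2 + (u p.2 : ℝ) ^ 2) / 2 := by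
        nlinarith [sq_nonneg (|(u p.1 : ℝ)| - |(u p.2 : ℝ)|), sq_abs (u p.1 : ℝ),
          sq_abs (u p.2 : ℝ)]
      nlinarith [mul_le_mul_of_nonneg_left h2 hexp.le]
    have hHsum : Summable (fun p : ℤ × ℤ => (G p + G p.swap) / 2) :=
      (hGsum.add hGsw).div_const 2
    have hFabs : Summable (fun p : ℤ × ℤ => |F p|) :=
      Summable.of_nonneg_of_le (fun p => abs_nonneg _) hbound hHsum
    have hFsum : Summable F := hFabs.of_abs
    have hFle : |∑' p, F p| ≤ C * S := by
      calc |∑' p, F p| ≤ ∑' p, |F p| := by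
            have h := norm_tsum_le_tsum_norm (f := F)
              (by simpa [Real.norm_eq_abs] using hFabs)
            simpa [Real.norm_eq_abs] using h
        _ ≤ ∑' p, (G p + G p.swap) / 2 :=
            Summable.tsum_le_tsum hbound hFabs hHsum
        _ = C * S := by
            rw [tsum_div_const, Summable.tsum_add hGsum hGsw, hGtsum, hGswtsum]
            ring
    have hT : -(1/2) * (C * S) ≤ Tkg (fun n => u n) := by
      have h1 : Tkg (fun n => u n) = -(1/2) * ∑' p, F p := rfl
      rw [h1]
      have := (abs_le.mp hFle).2
      linarith
    have hlogabs : (fun n : ℤ => |(u n : ℝ) ^ 2 * Real.log ((u n : ℝ) ^ 2)|)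
        = fun n => (u n : ℝ) ^ 2 * |Real.log ((u n : ℝ) ^ 2)| :=
      funext fun n => by rw [abs_mul, abs_of_nonneg (sq_nonneg _)]
    have hlog_sum : Summable (fun n : ℤ => (u n : ℝ) ^ 2 * Real.log ((u n : ℝ) ^ 2)) :=
      Summable.of_abs (hlogabs ▸ hsum)
    have hWterm : ∀ n : ℤ,
        (Lam / 2 + 1 / 4 + (1 / 4) * Real.log (1 / ε ^ 2)) * (u n : ℝ) ^ 2 ≤
          (Lam / 2 + 1 / 4) * (u n : ℝ) ^ 2
            - (1 / 4) * ((u n : ℝ) ^ 2 * Real.log ((u n : ℝ) ^ 2)) := by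
      intro n
      rcases eq_or_ne (u n : ℝ) 0 with h | h
      · simp [h]
      · have hpos : 0 < (u n : ℝ) ^ 2 := by positivity
        have hle : (u n : ℝ) ^ 2 ≤ ε ^ 2 := by
          have h1 := hub n
          nlinarith [abs_nonneg (u n : ℝ), sq_abs (u n : ℝ)]
        have hlog : Real.log ((u n : ℝ) ^ 2) ≤ Real.log (ε ^ 2) :=
          Real.log_le_log hpos hle
        have hlog2 : Real.log (1 / ε ^ 2) = -Real.log (ε ^ 2) := by
          rw [one_div, Real.log_inv]
        have key : (u n : ℝ) ^ 2 * (Real.log ((u n : ℝ) ^ 2) - Real.log (ε ^ 2)) ≤ 0 :=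
          mul_nonpos_of_nonneg_of_nonpos hpos.le (sub_nonpos.mpr hlog)
        rw [hlog2]
        nlinarith [key]
    have hW : (Lam / 2 + 1 / 4 + (1 / 4) * Real.log (1 / ε ^ 2)) * S ≤
        Wkg (fun n => u n) := by
      have h1 : Wkg (fun n => u n) = ∑' n : ℤ, ((Lam / 2 + 1 / 4) * (u n : ℝ) ^ 2
          - (1 / 4) * ((u n : ℝ) ^ 2 * Real.log ((u n : ℝ) ^ 2))) := rfl
      rw [h1]
      have h2 := Summable.tsum_le_tsum hWterm (hS2.mul_left _)
        ((hS2.mul_left _).sub (hlog_sum.mul_left _))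
      rw [tsum_mul_left] at h2
      exact h2
    have hkey : (Lam / 2 + 1 / 4 - (Real.exp 1 + 1) / (2 * (Real.exp 1 - 1))
          + (1 / 4) * Real.log (1 / ε ^ 2)) * S
        = -(1/2) * (C * S)
          + (Lam / 2 + 1 / 4 + (1 / 4) * Real.log (1 / ε ^ 2)) * S := by
      have h1 : (Real.exp 1 + 1) / (2 * (Real.exp 1 - 1)) = (1/2) * C := by
        rw [hC]
        field_simp
      rw [h1]
      ring
    rw [ge_iff_le, hnorm, hkey]
    exact add_le_add hT hW
  refine ⟨hmain, Real.exp (-2), Real.exp_pos _, fun u hsum hpos hle => ?_⟩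
  have he : (2:ℝ) < Real.exp 1 := by
    have := Real.exp_one_gt_d9; linarith
  have he1 : (0:ℝ) < Real.exp 1 - 1 := by linarith
  have hub : ∀ n : ℤ, |u n| ≤ Real.exp (-2) := by
    intro n
    have h := lp.norm_apply_le_norm (by norm_num : (2 : ENNReal) ≠ 0) u n
    rw [Real.norm_eq_abs] at h
    exact h.trans hle
  have h1 := hmain (Real.exp (-2)) (Real.exp_pos _)
    (Real.exp_lt_one_iff.mpr (by norm_num)) u hub hsum
  have hL : Real.log (1 / Real.exp (-2) ^ 2) = 4 := by
    rw [← Real.exp_nat_mul, one_div, ← Real.exp_neg, Real.log_exp]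
    norm_num
  have hcoef : 0 < Lam / 2 + 1 / 4 - (Real.exp 1 + 1) / (2 * (Real.exp 1 - 1))
      + (1 / 4) * Real.log (1 / Real.exp (-2) ^ 2) := by
    rw [hL]
    have he3 : Real.exp 1 < 3 := by
      have := Real.exp_one_lt_d9; linarith
    have h2 : (0:ℝ) < Real.exp 1 ^ 2 - 1 := by nlinarith
    have hne1 : Real.exp 1 - 1 ≠ 0 := ne_of_gt he1
    have hne2 : Real.exp 1 ^ 2 - 1 ≠ 0 := ne_of_gt h2
    have key : Lam / 2 + 1 / 4 - (Real.exp 1 + 1) / (2 * (Real.exp 1 - 1))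
        + (1 / 4) * (4:ℝ)
        = (5 * Real.exp 1 ^ 2 - 4 * Real.exp 1 - 5) / (4 * (Real.exp 1 ^ 2 - 1)) := by
      rw [show Lam = (Real.exp 1 ^ 2 + 1) / (Real.exp 1 ^ 2 - 1) from rfl]
      exact coef_key (Real.exp 1) hne1 hne2
    rw [key]
    apply div_pos
    · nlinarith
    · nlinarith
  have hn2 : (0:ℝ) < ‖u‖ ^ 2 := pow_pos hpos 2
  calc (0:ℝ) < (Lam / 2 + 1 / 4 - (Real.exp 1 + 1) / (2 * (Real.exp 1 - 1))
        + (1 / 4) * Real.log (1 / Real.exp (-2) ^ 2)) * ‖u‖ ^ 2 :=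
      mul_pos hcoef hn2
    _ ≤ Tkg (fun n => u n) + Wkg (fun n => u n) := h1
end

section
/- For every a > 0 and A > 0, the on-site peakon π_n = A exp(−a|n|) is an exact time-independent solution of the discrete Klein–Gordon lattice equation: for every n ∈ ℤ, ∑_{m∈ℤ} exp(−a|n−m|) π_m − ((e^{2a}+1)/(e^{2a}−1) − (1/(2a)) ln(π_n²/A²)) π_n = 0. -/
open Real

lemma peakon_key_nat (a : ℝ) (ha : 0 < a) (N : ℕ) :
    HasSum (fun m : ℤ => Real.exp (-a * |(N : ℝ) - (m : ℝ)|) * Real.exp (-a * |(m : ℝ)|))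
      (Real.exp (-a * N) * ((N : ℝ) + (Real.exp (2 * a) + 1) / (Real.exp (2 * a) - 1))) := by
  set r : ℝ := Real.exp (-(2 * a)) with hrdef
  have hr0 : 0 < r := Real.exp_pos _
  have hr1 : r < 1 := by
    apply Real.exp_lt_one_iff.mpr; linarith
  have h1r : (0:ℝ) < 1 - r := by linarith
  have geom : HasSum (fun k : ℕ => r ^ k) (1 - r)⁻¹ :=
    hasSum_geometric_of_lt_one hr0.le hr1
  have hrpow : ∀ k : ℕ, r ^ k = Real.exp (-(2 * a) * k) := by
    intro k; rw [← Real.exp_nat_mul]; ring_nf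
  -- negative part
  have hneg : HasSum (fun k : ℕ =>
      Real.exp (-a * |(N : ℝ) - ((Int.negSucc k : ℤ) : ℝ)|) *
        Real.exp (-a * |((Int.negSucc k : ℤ) : ℝ)|))
      (Real.exp (-a * N) * (r * (1 - r)⁻¹)) := by
    refine ((geom.mul_left r).mul_left (Real.exp (-a * N))).congr_fun fun k => ?_
    have h1 : ((Int.negSucc k : ℤ) : ℝ) = -((k : ℝ) + 1) := by push_cast; ring
    rw [h1, hrpow k]
    have hN0 : (0:ℝ) ≤ (N:ℝ) := Nat.cast_nonneg N
    have hk0 : (0:ℝ) ≤ (k:ℝ) := Nat.cast_nonneg k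
    rw [abs_of_nonneg (by linarith), abs_of_nonpos (by linarith),
      ← Real.exp_add, ← Real.exp_add, ← Real.exp_add]
    ring_nf
  -- positive part
  have hpos : HasSum (fun m : ℕ =>
      Real.exp (-a * |(N : ℝ) - ((Int.ofNat m : ℤ) : ℝ)|) *
        Real.exp (-a * |((Int.ofNat m : ℤ) : ℝ)|))
      (Real.exp (-a * N) * (r * (1 - r)⁻¹) + (N + 1) * Real.exp (-a * N)) := by
    set f : ℕ → ℝ := fun m =>
      Real.exp (-a * |(N : ℝ) - (m : ℝ)|) * Real.exp (-a * |(m : ℝ)|) with hf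
    have hfc : (fun m : ℕ =>
        Real.exp (-a * |(N : ℝ) - ((Int.ofNat m : ℤ) : ℝ)|) *
          Real.exp (-a * |((Int.ofNat m : ℤ) : ℝ)|)) = f := by
      funext m; simp [hf]
    rw [hfc]
    have htail : HasSum (fun m : ℕ => f (m + (N + 1)))
        (Real.exp (-a * N) * (r * (1 - r)⁻¹)) := by
      refine ((geom.mul_left r).mul_left (Real.exp (-a * N))).congr_fun fun m => ?_
      have hN0 : (0:ℝ) ≤ (N:ℝ) := Nat.cast_nonneg N
      have hm0 : (0:ℝ) ≤ (m:ℝ) := Nat.cast_nonneg m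
      simp only [hf]
      push_cast
      rw [abs_of_nonpos (by linarith), abs_of_nonneg (by linarith), hrpow m,
        ← Real.exp_add, ← Real.exp_add, ← Real.exp_add]
      ring_nf
    have := (hasSum_nat_add_iff (f := f) (N + 1)).mp htail
    have hsum : ∑ i ∈ Finset.range (N + 1), f i = (N + 1) * Real.exp (-a * N) := by
      have : ∀ i ∈ Finset.range (N + 1), f i = Real.exp (-a * N) := by
        intro i hi
        have hi' : i ≤ N := Nat.lt_succ_iff.mp (Finset.mem_range.mp hi)
        have hiN : (i : ℝ) ≤ (N : ℝ) := by exact_mod_cast hi'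
        have hi0 : (0:ℝ) ≤ (i:ℝ) := Nat.cast_nonneg i
        simp only [hf]
        rw [abs_of_nonneg (by linarith), abs_of_nonneg hi0, ← Real.exp_add]
        ring_nf
      rw [Finset.sum_congr rfl this]
      simp [Finset.sum_const]
    rw [hsum] at this
    exact this
  -- combine
  have hint := hpos.int_rec hneg
  have hfun : (fun m : ℤ => Real.exp (-a * |(N : ℝ) - (m : ℝ)|) * Real.exp (-a * |(m : ℝ)|))
      = fun m : ℤ => Int.rec
        (fun m : ℕ => Real.exp (-a * |(N : ℝ) - ((Int.ofNat m : ℤ) : ℝ)|) *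
          Real.exp (-a * |((Int.ofNat m : ℤ) : ℝ)|))
        (fun k : ℕ => Real.exp (-a * |(N : ℝ) - ((Int.negSucc k : ℤ) : ℝ)|) *
          Real.exp (-a * |((Int.negSucc k : ℤ) : ℝ)|)) m := by
    funext m; cases m <;> rfl
  rw [hfun]
  convert hint using 1
  -- value identity
  have he : Real.exp (2 * a) * r = 1 := by
    rw [← Real.exp_add]; simp
  have he1 : (1:ℝ) < Real.exp (2 * a) := by
    have := Real.add_one_lt_exp (x := 2 * a) (by positivity)
    linarith
  have hne : Real.exp (2 * a) - 1 ≠ 0 := by linarith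
  have hC : (Real.exp (2 * a) + 1) / (Real.exp (2 * a) - 1) = 1 + 2 * (r * (1 - r)⁻¹) := by
    rw [div_eq_iff hne]
    field_simp
    linear_combination (-2 : ℝ) * he
  rw [hC]
  ring_nf

lemma peakon_key (a : ℝ) (ha : 0 < a) (n : ℤ) :
    HasSum (fun m : ℤ => Real.exp (-a * |(n : ℝ) - (m : ℝ)|) * Real.exp (-a * |(m : ℝ)|))
      (Real.exp (-a * |(n : ℝ)|) *
        (|(n : ℝ)| + (Real.exp (2 * a) + 1) / (Real.exp (2 * a) - 1))) := by
  obtain ⟨N, rfl | rfl⟩ := n.eq_nat_or_neg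
  · have h := peakon_key_nat a ha N
    have habs : |((N : ℤ) : ℝ)| = (N : ℝ) := by
      rw [abs_of_nonneg]; · push_cast; ring
      · push_cast; exact Nat.cast_nonneg N
    rw [habs]
    exact h.congr_fun fun m => by push_cast; ring_nf
  · have h := peakon_key_nat a ha N
    have habs : |(-(N : ℝ))| = (N : ℝ) := by rw [abs_neg, Nat.abs_cast]
    simp only [Int.cast_neg, Int.cast_natCast, habs]
    have key : HasSum (fun m : ℤ =>
        (fun m : ℤ => Real.exp (-a * |(-(N : ℝ)) - (m : ℝ)|) * Real.exp (-a * |(m : ℝ)|))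
          ((Equiv.neg ℤ) m))
        (Real.exp (-a * N) * ((N : ℝ) + (Real.exp (2 * a) + 1) / (Real.exp (2 * a) - 1))) := by
      refine h.congr_fun fun m => ?_
      simp only [Equiv.neg_apply, Int.cast_neg]
      rw [show (-(N:ℝ)) - (-(m:ℝ)) = -((N:ℝ) - (m:ℝ)) by ring, abs_neg, abs_neg]
    exact (Equiv.neg ℤ).hasSum_iff.mp key

/-- For every `a > 0` and `A > 0`, the on-site peakon `π_n = A exp (-a|n|)` is
an exact static solution of the discrete Klein–Gordon lattice equation: the
right-hand side of the equation vanishes at `π` for every `n`. -/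
theorem onsite_peakon_is_static_KG_solution (a A : ℝ) (ha : 0 < a) (hA : 0 < A) (n : ℤ) :
    (∑' m : ℤ, Real.exp (-a * |(n : ℝ) - (m : ℝ)|) * (A * Real.exp (-a * |(m : ℝ)|)))
      - ((Real.exp (2 * a) + 1) / (Real.exp (2 * a) - 1)
          - (1 / (2 * a)) * Real.log ((A * Real.exp (-a * |(n : ℝ)|)) ^ 2 / A ^ 2))
        * (A * Real.exp (-a * |(n : ℝ)|)) = 0 := by
  have hsum : HasSum (fun m : ℤ => Real.exp (-a * |(n : ℝ) - (m : ℝ)|) *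
      (A * Real.exp (-a * |(m : ℝ)|)))
      (A * (Real.exp (-a * |(n : ℝ)|) *
        (|(n : ℝ)| + (Real.exp (2 * a) + 1) / (Real.exp (2 * a) - 1)))) := by
    exact ((peakon_key a ha n).mul_left A).congr_fun fun m => by ring
  rw [hsum.tsum_eq]
  have hlog : Real.log ((A * Real.exp (-a * |(n : ℝ)|)) ^ 2 / A ^ 2)
      = 2 * (-a * |(n : ℝ)|) := by
    have h1 : (A * Real.exp (-a * |(n : ℝ)|)) ^ 2 / A ^ 2
        = Real.exp (-a * |(n : ℝ)|) ^ 2 := by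
      field_simp
    rw [h1, Real.log_pow, Real.log_exp]
    push_cast; ring
  rw [hlog]
  have ha' : a ≠ 0 := ne_of_gt ha
  field_simp
  ring
end

section
/- For every a > 0 and A > 0, the standing wave u_n(t) = A e^{it} exp(−a|n|) is an exact solution of the discrete nonlinear Schrödinger lattice equation i·(du_n/dt) = −∑_{m∈ℤ} exp(−a|n−m|) u_m + (2/(e^{2a}−1) − (1/(2a)) ln(|u_n|²/A²)) u_n for all t ∈ ℝ and n ∈ ℤ. -/
/-!
With `r = e^{-a}` the coupling kernel is `r^{|k|}`, so the lattice sum is the discrete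
convolution `∑_m r^{|n-m|} r^{|m|}`. For `m` between `0` and `n` each term equals `r^{|n|}`, and
the two remaining tails are geometric series `r^{|n|+2} ∑_k r^{2k}`; hence the sum is
`r^{|n|} (|n| + 1 + 2/(e^{2a}-1))`.
On the other hand `ln (|u_n|²/A²) = -2a|n|`, so the nonlinear coefficient is `2/(e^{2a}-1) + |n|`.
The two contributions cancel up to `-u_n`, which is exactly `i u̇_n` for `u_n ∝ e^{it}`.
-/

section LatticeConvolution

variable {𝕜 : Type*} [NormedField 𝕜] {r : 𝕜}

theorem hasSum_pow_natAbs_sub_mul_pow_natAbs_natCast (hr : ‖r‖ < 1) (N : ℕ) :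
    HasSum (fun m : ℤ => r ^ ((N : ℤ) - m).natAbs * r ^ m.natAbs)
      (r ^ N * (N + 1 + 2 * r ^ 2 / (1 - r ^ 2))) := by
  have hr2 : ‖r ^ 2‖ < 1 := by rw [norm_pow]; nlinarith [norm_nonneg r]
  have hr2_ne : 1 - r ^ 2 ≠ 0 := sub_ne_zero.mpr fun h => by simp [← h] at hr2
  -- each of the tails `m < 0` and `m > N` is, term by term, this geometric series
  have tail : HasSum (fun k : ℕ => r ^ (N + 2) * (r ^ 2) ^ k) (r ^ (N + 2) * (1 - r ^ 2)⁻¹) :=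
    (hasSum_geometric_of_norm_lt_one hr2).mul_left _
  have tail_pow (j k : ℕ) (hj : j = N + 2 * k + 2) : r ^ j = r ^ (N + 2) * (r ^ 2) ^ k := by
    rw [hj, ← pow_mul, ← pow_add]; ring_nf
  have negative : HasSum
      (fun k : ℕ => r ^ ((N : ℤ) - -(k + 1)).natAbs * r ^ (-(k + 1 : ℤ)).natAbs)
      (r ^ (N + 2) * (1 - r ^ 2)⁻¹) := by
    refine tail.congr_fun fun k => ?_
    rw [← pow_add, tail_pow _ k (by omega)]
  have beyond : HasSum
      (fun k : ℕ =>
        r ^ ((N : ℤ) - (k + (N + 1) : ℕ)).natAbs * r ^ ((k + (N + 1) : ℕ) : ℤ).natAbs)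
      (r ^ (N + 2) * (1 - r ^ 2)⁻¹) := by
    refine tail.congr_fun fun k => ?_
    rw [← pow_add, tail_pow _ k (by omega)]
  have plateau : ∀ i ∈ Finset.range (N + 1),
      r ^ ((N : ℤ) - i).natAbs * r ^ (i : ℤ).natAbs = r ^ N := by
    intro i hi
    have hiN := Finset.mem_range.mp hi
    rw [← pow_add]
    congr 1
    omega
  have nonneg := (hasSum_nat_add_iff
    (f := fun k : ℕ => r ^ ((N : ℤ) - k).natAbs * r ^ (k : ℤ).natAbs) (N + 1)).mp beyond
  rw [Finset.sum_congr rfl plateau, Finset.sum_const, Finset.card_range, nsmul_eq_mul] at nonneg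
  convert HasSum.of_nat_of_neg_add_one
    (f := fun m : ℤ => r ^ ((N : ℤ) - m).natAbs * r ^ m.natAbs) nonneg negative using 1
  rw [pow_add]
  field_simp
  push_cast
  ring

theorem hasSum_pow_natAbs_sub_mul_pow_natAbs (hr : ‖r‖ < 1) (n : ℤ) :
    HasSum (fun m : ℤ => r ^ (n - m).natAbs * r ^ m.natAbs)
      (r ^ n.natAbs * (n.natAbs + 1 + 2 * r ^ 2 / (1 - r ^ 2))) := by
  obtain ⟨N, rfl | rfl⟩ := Int.eq_nat_or_neg n
  · exact hasSum_pow_natAbs_sub_mul_pow_natAbs_natCast hr N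
  · rw [Int.natAbs_neg, Int.natAbs_natCast, ← (Equiv.neg ℤ).hasSum_iff]
    convert hasSum_pow_natAbs_sub_mul_pow_natAbs_natCast hr N using 2 with m
    simp only [Function.comp_apply, Equiv.neg_apply, Int.natAbs_neg,
      show -(N : ℤ) - -m = -(N - m) by ring]

end LatticeConvolution

theorem Real.exp_neg_mul_abs_intCast (a : ℝ) (k : ℤ) :
    Real.exp (-a * |(k : ℝ)|) = Real.exp (-a) ^ k.natAbs := by
  rw [← Real.exp_nat_mul, Nat.cast_natAbs, Int.cast_abs, mul_comm]

theorem Real.log_sq_mul_exp_div_sq {A : ℝ} (hA : A ≠ 0) (x : ℝ) :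
    Real.log ((A * Real.exp x) ^ 2 / A ^ 2) = 2 * x := by
  rw [mul_pow, mul_div_cancel_left₀ _ (pow_ne_zero 2 hA), ← Real.exp_nat_mul, Real.log_exp]
  push_cast
  rfl

theorem hasDerivAt_cexp_I_mul_ofReal (t : ℝ) :
    HasDerivAt (fun s : ℝ => Complex.exp (Complex.I * s))
      (Complex.exp (Complex.I * t) * Complex.I) t := by
  simpa using ((hasDerivAt_id (t : ℂ)).const_mul Complex.I).cexp.comp_ofReal

theorem hasSum_exp_neg_mul_abs_sub_mul_exp_neg_mul_abs {a : ℝ} (ha : 0 < a) (n : ℤ) :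
    HasSum (fun m : ℤ => Real.exp (-a * |(n : ℝ) - m|) * Real.exp (-a * |(m : ℝ)|))
      (Real.exp (-a * |(n : ℝ)|) * (|(n : ℝ)| + 1 + 2 / (Real.exp (2 * a) - 1))) := by
  have hr : ‖Real.exp (-a)‖ < 1 := by
    rw [Real.norm_of_nonneg (Real.exp_nonneg _), Real.exp_lt_one_iff]; linarith
  have two_div : 2 / (Real.exp (2 * a) - 1) = 2 * Real.exp (-a) ^ 2 / (1 - Real.exp (-a) ^ 2) := by
    have h2a : Real.exp (2 * a) * Real.exp (-a) ^ 2 = 1 := by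
      rw [← Real.exp_nat_mul, ← Real.exp_add]; simp
    have hpos : 1 < Real.exp (2 * a) := Real.one_lt_exp_iff.mpr (by linarith)
    rw [div_eq_div_iff (by linarith) (by nlinarith)]
    linear_combination -2 * h2a
  have h := hasSum_pow_natAbs_sub_mul_pow_natAbs hr n
  rw [← Real.exp_neg_mul_abs_intCast, Nat.cast_natAbs, Int.cast_abs, ← two_div] at h
  refine h.congr_fun fun m => ?_
  rw [← Int.cast_sub, Real.exp_neg_mul_abs_intCast, Real.exp_neg_mul_abs_intCast]

/-- For every `a > 0` and `A > 0`, the standing wave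
`u_n(t) = A e^{it} exp (-a|n|)` is an exact solution of the discrete nonlinear
Schrödinger lattice equation
`i u̇_n = -∑_{m∈ℤ} exp (-a|n-m|) u_m + (2/(e^{2a}-1) - (1/(2a)) ln (|u_n|²/A²)) u_n`. -/
theorem peakon_standing_wave_solves_DNLS (a A : ℝ) (ha : 0 < a) (hA : 0 < A)
    (u : ℤ → ℝ → ℂ)
    (hu : ∀ (n : ℤ) (t : ℝ),
      u n t = (A : ℂ) * Complex.exp (Complex.I * t) * (Real.exp (-a * |(n : ℝ)|) : ℝ)) :
    ∀ (n : ℤ) (t : ℝ),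
      Complex.I * deriv (fun s => u n s) t
        = -(∑' m : ℤ, (Real.exp (-a * |(n : ℝ) - (m : ℝ)|) : ℝ) * u m t)
          + ((2 / (Real.exp (2 * a) - 1)
              - (1 / (2 * a)) * Real.log (‖u n t‖ ^ 2 / A ^ 2) : ℝ) : ℂ)
            * u n t := by
  intro n t
  have hderiv : HasDerivAt (fun s => u n s) (Complex.I * u n t) t := by
    simp only [hu]
    exact (((hasDerivAt_cexp_I_mul_ofReal t).const_mul _).mul_const _).congr_deriv (by ring)
  have hsum : HasSum (fun m : ℤ => ((Real.exp (-a * |(n : ℝ) - m|) : ℝ) : ℂ) * u m t)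
      (((Real.exp (-a * |(n : ℝ)|) * (|(n : ℝ)| + 1 + 2 / (Real.exp (2 * a) - 1)) : ℝ) : ℂ)
        * (A * Complex.exp (Complex.I * t))) := by
    refine ((Complex.hasSum_ofReal.mpr
      (hasSum_exp_neg_mul_abs_sub_mul_exp_neg_mul_abs ha n)).mul_right _).congr_fun fun m => ?_
    rw [hu]
    push_cast
    ring
  have hnorm : ‖u n t‖ = A * Real.exp (-a * |(n : ℝ)|) := by
    rw [hu, norm_mul, norm_mul, Complex.norm_exp_I_mul_ofReal, Complex.norm_real,
      Complex.norm_real, Real.norm_of_nonneg hA.le, Real.norm_of_nonneg (Real.exp_nonneg _),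
      mul_one]
  have hcoef : 2 / (Real.exp (2 * a) - 1) - 1 / (2 * a) * Real.log (‖u n t‖ ^ 2 / A ^ 2)
      = 2 / (Real.exp (2 * a) - 1) + |(n : ℝ)| := by
    rw [hnorm, Real.log_sq_mul_exp_div_sq hA.ne']
    field_simp
    ring
  rw [hderiv.deriv, hsum.tsum_eq, hcoef, hu]
  push_cast [-Complex.ofReal_exp]
  linear_combination (A * Complex.exp (Complex.I * t) * (Real.exp (-a * |(n : ℝ)|) : ℂ)) *
    Complex.I_mul_I
end

section
/- Let π_n = exp(−|n|) and for λ > 0 let π^{(λ)}_n = λ^{1/2} π_n. Then the static Klein–Gordon energy satisfies the exact scaling identity T(π^{(λ)}) + W(π^{(λ)}) = (coth(1)/4) · λ(1 − ln λ) for all λ > 0. In particular the first derivative in λ at λ = 1 vanishes, while the second derivative at λ = 1 equals −coth(1)/4 < 0, so the peakon π is not a local minimizer of the energy T + W. -/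
/-- The peakon profile `π_n = exp (-|n|)`. -/
noncomputable def pk (n : ℤ) : ℝ := Real.exp (-|(n : ℝ)|)

lemma abs_cast' (n : ℤ) : |(n:ℝ)| = (n.natAbs : ℝ) := by
  rw [Nat.cast_natAbs, Int.cast_abs]

lemma exp_abs_eq' (n : ℤ) : Real.exp (-|(n:ℝ)|) = Real.exp (-1) ^ n.natAbs := by
  rw [abs_cast', ← Real.exp_nat_mul]; ring_nf

lemma pkz1 {x : ℝ} (h0 : 0 ≤ x) (h1 : x < 1) :
    HasSum (fun n : ℤ => x ^ n.natAbs) ((1 + x) / (1 - x)) := by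
  have hne : (1:ℝ) - x ≠ 0 := by linarith
  have key1 : ∀ n : ℕ, x ^ ((n : ℤ) + 1).natAbs = x * x ^ n := by
    intro n
    have hn : ((n : ℤ) + 1).natAbs = n + 1 := by omega
    rw [hn, pow_succ]; ring
  have key2 : ∀ n : ℕ, x ^ (-((n : ℤ) + 1)).natAbs = x * x ^ n := by
    intro n
    have hn : (-((n : ℤ) + 1)).natAbs = n + 1 := by omega
    rw [hn, pow_succ]; ring
  have hgeo := (hasSum_geometric_of_lt_one h0 h1).mul_left x
  have hpos : HasSum (fun n : ℕ => x ^ ((n : ℤ) + 1).natAbs) (x * (1 - x)⁻¹) := by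
    simp only [key1]; exact hgeo
  have hneg : HasSum (fun n : ℕ => x ^ (-((n : ℤ) + 1)).natAbs) (x * (1 - x)⁻¹) := by
    simp only [key2]; exact hgeo
  have h := HasSum.of_add_one_of_neg_add_one (f := fun k : ℤ => x ^ k.natAbs) hpos hneg
  have hv : x * (1 - x)⁻¹ + x ^ (0 : ℤ).natAbs + x * (1 - x)⁻¹ = (1 + x) / (1 - x) := by
    simp only [Int.natAbs_zero, pow_zero]
    field_simp
    ring
  rwa [hv] at h

lemma pkz2 {x : ℝ} (h0 : 0 ≤ x) (h1 : x < 1) :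
    HasSum (fun n : ℤ => (n.natAbs : ℝ) * x ^ n.natAbs) (2 * x / (1 - x) ^ 2) := by
  have base : HasSum (fun n : ℕ => (n : ℝ) * x ^ n) (x / (1 - x) ^ 2) :=
    hasSum_coe_mul_geometric_of_norm_lt_one (by rwa [Real.norm_eq_abs, abs_of_nonneg h0])
  have h2 : HasSum (fun n : ℕ => ((n + 1 : ℕ) : ℝ) * x ^ (n + 1)) (x / (1 - x) ^ 2) := by
    have := (hasSum_nat_add_iff (f := fun n : ℕ => (n : ℝ) * x ^ n) 1).mpr (by simpa using base)
    simpa using this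
  have key1 : ∀ n : ℕ, ((((n : ℤ) + 1).natAbs : ℝ)) * x ^ ((n : ℤ) + 1).natAbs
      = ((n + 1 : ℕ) : ℝ) * x ^ (n + 1) := by
    intro n
    have hn : ((n : ℤ) + 1).natAbs = n + 1 := by omega
    rw [hn]
  have key2 : ∀ n : ℕ, (((-((n : ℤ) + 1)).natAbs : ℝ)) * x ^ (-((n : ℤ) + 1)).natAbs
      = ((n + 1 : ℕ) : ℝ) * x ^ (n + 1) := by
    intro n
    have hn : (-((n : ℤ) + 1)).natAbs = n + 1 := by omega
    rw [hn]
  have hpos : HasSum (fun n : ℕ => ((((n : ℤ) + 1).natAbs : ℝ)) * x ^ ((n : ℤ) + 1).natAbs)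
      (x / (1 - x) ^ 2) := by simp only [key1]; exact h2
  have hneg : HasSum (fun n : ℕ => (((-((n : ℤ) + 1)).natAbs : ℝ)) * x ^ (-((n : ℤ) + 1)).natAbs)
      (x / (1 - x) ^ 2) := by simp only [key2]; exact h2
  have h := HasSum.of_add_one_of_neg_add_one
    (f := fun k : ℤ => (k.natAbs : ℝ) * x ^ k.natAbs) hpos hneg
  have hv : x / (1 - x) ^ 2 + ((0 : ℤ).natAbs : ℝ) * x ^ (0 : ℤ).natAbs + x / (1 - x) ^ 2
      = 2 * x / (1 - x) ^ 2 := by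
    simp only [Int.natAbs_zero, Nat.cast_zero, zero_mul, add_zero, pow_zero]
    ring
  rwa [hv] at h


lemma pkq1 {x : ℝ} (h0 : 0 ≤ x) (h1 : x < 1) : x ^ 2 < 1 := by nlinarith

lemma pkconv_nat {x : ℝ} (h0 : 0 ≤ x) (h1 : x < 1) (N : ℕ) :
    HasSum (fun m : ℤ => x ^ ((N : ℤ) - m).natAbs * x ^ m.natAbs)
      (x ^ N * ((N : ℝ) + (1 + x ^ 2) / (1 - x ^ 2))) := by
  have hq : x ^ 2 < 1 := pkq1 h0 h1
  have hq0 : 0 ≤ x ^ 2 := sq_nonneg x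
  have hqe : (1:ℝ) - x ^ 2 ≠ 0 := by linarith
  set f : ℤ → ℝ := fun m : ℤ => x ^ ((N : ℤ) - m).natAbs * x ^ m.natAbs with hf
  -- geometric tail
  have hgeo : HasSum (fun k : ℕ => x ^ N * (x ^ 2) ^ (k + 1)) (x ^ N * (x ^ 2 * (1 - x ^ 2)⁻¹)) := by
    have := ((hasSum_geometric_of_lt_one hq0 hq).mul_left (x ^ 2)).mul_left (x ^ N)
    simpa only [← pow_succ'] using this
  -- negative part
  have hneg : HasSum (fun k : ℕ => f (-((k : ℤ) + 1))) (x ^ N * (x ^ 2 * (1 - x ^ 2)⁻¹)) := by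
    have key : ∀ k : ℕ, f (-((k : ℤ) + 1)) = x ^ N * (x ^ 2) ^ (k + 1) := by
      intro k
      have e1 : ((N : ℤ) - -((k : ℤ) + 1)).natAbs = N + k + 1 := by omega
      have e2 : (-((k : ℤ) + 1)).natAbs = k + 1 := by omega
      rw [hf]; simp only [e1, e2]; ring
    simp only [key]; exact hgeo
  -- positive part
  have hpos : HasSum (fun k : ℕ => f ((k : ℤ) + 1))
      (x ^ N * (x ^ 2 * (1 - x ^ 2)⁻¹) + (N : ℝ) * x ^ N) := by
    set g : ℕ → ℝ := fun k => f ((k : ℤ) + 1) with hg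
    have htail : HasSum (fun k : ℕ => g (k + N)) (x ^ N * (x ^ 2 * (1 - x ^ 2)⁻¹)) := by
      have key : ∀ k : ℕ, g (k + N) = x ^ N * (x ^ 2) ^ (k + 1) := by
        intro k
        have e1 : ((N : ℤ) - ((k + N : ℕ) : ℤ) - 1).natAbs = k + 1 := by omega
        have e1' : ((N : ℤ) - (((k + N : ℕ) : ℤ) + 1)).natAbs = k + 1 := by omega
        have e2 : (((k + N : ℕ) : ℤ) + 1).natAbs = k + N + 1 := by omega
        rw [hg, hf]; simp only [e1', e2]; ring
      simp only [key]; exact hgeo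
    have hsum := (hasSum_nat_add_iff (f := g) N).mp htail
    have hfin : ∑ i ∈ Finset.range N, g i = (N : ℝ) * x ^ N := by
      rw [Finset.sum_congr rfl (g := fun _ => x ^ N)]
      · simp [Finset.card_range]
      · intro i hi
        have hiN : i < N := Finset.mem_range.mp hi
        have e1 : ((N : ℤ) - ((i : ℤ) + 1)).natAbs = N - 1 - i := by omega
        have e2 : ((i : ℤ) + 1).natAbs = i + 1 := by omega
        rw [hg, hf]; simp only [e1, e2, ← pow_add]
        congr 1
        omega
    rwa [hfin] at hsum
  have h := HasSum.of_add_one_of_neg_add_one (f := f) hpos hneg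
  have hzero : f 0 = x ^ N := by
    rw [hf]; simp
  rw [hzero] at h
  convert h using 1
  field_simp
  ring

lemma pkconv {x : ℝ} (h0 : 0 ≤ x) (h1 : x < 1) (n : ℤ) :
    HasSum (fun m : ℤ => x ^ (n - m).natAbs * x ^ m.natAbs)
      (x ^ n.natAbs * ((n.natAbs : ℝ) + (1 + x ^ 2) / (1 - x ^ 2))) := by
  obtain ⟨N, hN | hN⟩ := Int.eq_nat_or_neg n
  · subst hN
    simpa using pkconv_nat h0 h1 N
  · subst hN
    have base := pkconv_nat h0 h1 N
    have hcomp : ((fun m : ℤ => x ^ ((-(N:ℤ)) - m).natAbs * x ^ m.natAbs) ∘ (Equiv.neg ℤ))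
        = fun m : ℤ => x ^ ((N : ℤ) - m).natAbs * x ^ m.natAbs := by
      funext m
      simp only [Function.comp_apply, Equiv.neg_apply]
      have e1 : ((-(N:ℤ)) - (-m)).natAbs = ((N : ℤ) - m).natAbs := by omega
      have e2 : (-m).natAbs = m.natAbs := by omega
      rw [e1, e2]
    have : HasSum ((fun m : ℤ => x ^ ((-(N:ℤ)) - m).natAbs * x ^ m.natAbs) ∘ (Equiv.neg ℤ))
        (x ^ N * ((N : ℝ) + (1 + x ^ 2) / (1 - x ^ 2))) := by rw [hcomp]; exact base
    rw [Equiv.hasSum_iff] at this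
    have e3 : (-(N:ℤ)).natAbs = N := by omega
    rw [e3]
    exact this

lemma pkdouble {x : ℝ} (h0 : 0 ≤ x) (h1 : x < 1) :
    HasSum (fun p : ℤ × ℤ => x ^ (p.1 - p.2).natAbs * x ^ p.1.natAbs * x ^ p.2.natAbs)
      (2 * x ^ 2 / (1 - x ^ 2) ^ 2 + ((1 + x ^ 2) / (1 - x ^ 2)) * ((1 + x ^ 2) / (1 - x ^ 2))) := by
  have hq : x ^ 2 < 1 := pkq1 h0 h1
  have hq0 : 0 ≤ x ^ 2 := sq_nonneg x
  set F : ℤ × ℤ → ℝ := fun p => x ^ (p.1 - p.2).natAbs * x ^ p.1.natAbs * x ^ p.2.natAbs with hF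
  have hsummand : Summable F := by
    have hs1 : Summable (fun n : ℤ => x ^ n.natAbs) := (pkz1 h0 h1).summable
    have hprod : Summable (fun p : ℤ × ℤ => x ^ p.1.natAbs * x ^ p.2.natAbs) := by
      apply summable_mul_of_summable_norm (f := fun n : ℤ => x ^ n.natAbs)
        (g := fun n : ℤ => x ^ n.natAbs) <;>
      · apply Summable.congr hs1
        intro n
        rw [Real.norm_eq_abs, abs_of_nonneg (pow_nonneg h0 _)]
    apply Summable.of_nonneg_of_le _ _ hprod
    · intro p
      positivity
    · intro p
      rw [hF]
      have hle : x ^ (p.1 - p.2).natAbs ≤ 1 := pow_le_one₀ h0 h1.le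
      calc x ^ (p.1 - p.2).natAbs * x ^ p.1.natAbs * x ^ p.2.natAbs
          ≤ 1 * x ^ p.1.natAbs * x ^ p.2.natAbs := by
            apply mul_le_mul_of_nonneg_right _ (pow_nonneg h0 _)
            exact mul_le_mul_of_nonneg_right hle (pow_nonneg h0 _)
        _ = x ^ p.1.natAbs * x ^ p.2.natAbs := by ring
  -- fibers
  have hfiber : ∀ b : ℤ, HasSum (fun c : ℤ => F (b, c))
      (x ^ b.natAbs * (x ^ b.natAbs * ((b.natAbs : ℝ) + (1 + x ^ 2) / (1 - x ^ 2)))) := by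
    intro b
    have h := (pkconv h0 h1 b).mul_left (x ^ b.natAbs)
    have he : (fun c : ℤ => F (b, c))
        = fun c : ℤ => x ^ b.natAbs * (x ^ (b - c).natAbs * x ^ c.natAbs) := by
      funext c; rw [hF]; ring
    rw [he]; exact h
  have hfib := hsummand.hasSum.prod_fiberwise hfiber
  have hg : HasSum (fun b : ℤ => x ^ b.natAbs * (x ^ b.natAbs * ((b.natAbs : ℝ)
      + (1 + x ^ 2) / (1 - x ^ 2))))
      (2 * x ^ 2 / (1 - x ^ 2) ^ 2 + ((1 + x ^ 2) / (1 - x ^ 2)) * ((1 + x ^ 2) / (1 - x ^ 2))) := by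
    have ha := pkz2 hq0 hq
    have hb := (pkz1 hq0 hq).mul_left ((1 + x ^ 2) / (1 - x ^ 2))
    have hc := ha.add hb
    have he : (fun b : ℤ => x ^ b.natAbs * (x ^ b.natAbs * ((b.natAbs : ℝ)
        + (1 + x ^ 2) / (1 - x ^ 2))))
        = fun b : ℤ => (b.natAbs : ℝ) * (x ^ 2) ^ b.natAbs
          + (1 + x ^ 2) / (1 - x ^ 2) * (x ^ 2) ^ b.natAbs := by
      funext b; ring
    rw [he]; exact hc
  have : (∑' p, F p) = 2 * x ^ 2 / (1 - x ^ 2) ^ 2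
      + ((1 + x ^ 2) / (1 - x ^ 2)) * ((1 + x ^ 2) / (1 - x ^ 2)) := hfib.unique hg
  rw [← this]
  exact hsummand.hasSum

lemma pk_eq (n : ℤ) : pk n = Real.exp (-1) ^ n.natAbs := exp_abs_eq' n

lemma exp_one_gt : (1:ℝ) < Real.exp 1 := by
  have := Real.exp_one_gt_d9; linarith

lemma lam_eq : Lam = (1 + Real.exp (-1) ^ 2) / (1 - Real.exp (-1) ^ 2) := by
  have hE : (1:ℝ) < Real.exp 1 := exp_one_gt
  have hE0 : Real.exp 1 ≠ 0 := by positivity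
  have hE2 : Real.exp 1 ^ 2 - 1 ≠ 0 := by nlinarith
  have hx : Real.exp (-1) = (Real.exp 1)⁻¹ := by
    rw [← Real.exp_neg]
  have hx2 : (1:ℝ) - Real.exp (-1) ^ 2 ≠ 0 := by
    have h1 : Real.exp (-1) < 1 := by
      rw [hx]; exact inv_lt_one_of_one_lt₀ hE
    have h0 : 0 < Real.exp (-1) := Real.exp_pos _
    nlinarith
  rw [Lam, hx]
  field_simp

/-- The scaling identity. -/
lemma scaling_identity (l : ℝ) (hl : 0 < l) :
    Tkg (fun n => Real.sqrt l * pk n) + Wkg (fun n => Real.sqrt l * pk n)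
      = (Lam / 4) * (l * (1 - Real.log l)) := by
  set x : ℝ := Real.exp (-1) with hxdef
  have hx0 : (0:ℝ) ≤ x := (Real.exp_pos _).le
  have hx0' : (0:ℝ) < x := Real.exp_pos _
  have hx1 : x < 1 := by
    rw [hxdef]; exact Real.exp_lt_one_iff.mpr (by norm_num)
  have hq0 : (0:ℝ) ≤ x ^ 2 := sq_nonneg x
  have hq1 : x ^ 2 < 1 := pkq1 hx0 hx1
  have hqne : (1:ℝ) - x ^ 2 ≠ 0 := by linarith
  have hsq : Real.sqrt l * Real.sqrt l = l := Real.mul_self_sqrt hl.le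
  have hlogx : Real.log x = -1 := by rw [hxdef, Real.log_exp]
  -- T part
  have hT : Tkg (fun n => Real.sqrt l * pk n)
      = -(1/2) * (l * (2 * x ^ 2 / (1 - x ^ 2) ^ 2
        + ((1 + x ^ 2) / (1 - x ^ 2)) * ((1 + x ^ 2) / (1 - x ^ 2)))) := by
    rw [Tkg]
    have he : (fun p : ℤ × ℤ => Real.exp (-|(p.1:ℝ) - (p.2:ℝ)|)
          * (Real.sqrt l * pk p.1) * (Real.sqrt l * pk p.2))
        = fun p : ℤ × ℤ => l * (x ^ (p.1 - p.2).natAbs * x ^ p.1.natAbs * x ^ p.2.natAbs) := by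
      funext p
      have habs : ((p.1:ℝ) - (p.2:ℝ)) = ((p.1 - p.2 : ℤ) : ℝ) := by push_cast; ring
      rw [habs, exp_abs_eq', pk_eq, pk_eq]
      conv_rhs => rw [← hsq]
      ring
    rw [he, tsum_mul_left, (pkdouble hx0 hx1).tsum_eq]
  -- W part
  have hW : Wkg (fun n => Real.sqrt l * pk n)
      = (l * (Lam / 2 + 1/4 - Real.log l / 4)) * ((1 + x ^ 2) / (1 - x ^ 2))
        + (l / 2) * (2 * x ^ 2 / (1 - x ^ 2) ^ 2) := by
    rw [Wkg]
    have he : (fun n : ℤ => (Lam / 2 + 1 / 4) * (Real.sqrt l * pk n) ^ 2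
          - (1 / 4) * ((Real.sqrt l * pk n) ^ 2 * Real.log ((Real.sqrt l * pk n) ^ 2)))
        = fun n : ℤ => (l * (Lam / 2 + 1/4 - Real.log l / 4)) * (x ^ 2) ^ n.natAbs
          + (l / 2) * ((n.natAbs : ℝ) * (x ^ 2) ^ n.natAbs) := by
      funext n
      have h1 : (Real.sqrt l * pk n) ^ 2 = l * (x ^ 2) ^ n.natAbs := by
        rw [mul_pow, Real.sq_sqrt hl.le, pk_eq]
        ring
      have hp0 : (0:ℝ) < (x ^ 2) ^ n.natAbs := pow_pos (by positivity) _
      have h2 : Real.log (l * (x ^ 2) ^ n.natAbs)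
          = Real.log l + (n.natAbs : ℝ) * (-2) := by
        rw [Real.log_mul (ne_of_gt hl) (ne_of_gt hp0), Real.log_pow, Real.log_pow, hlogx]
        push_cast; ring
      rw [h1, h2]
      ring
    rw [he]
    exact (((pkz1 hq0 hq1).mul_left _).add ((pkz2 hq0 hq1).mul_left _)).tsum_eq
  rw [hT, hW, lam_eq, ← hxdef]
  field_simp
  ring

/-- Derrick-type scaling identity for the peakon: for the scaled family
`π^{(λ)}_n = λ^{1/2} π_n` one has
`T(π^{(λ)}) + W(π^{(λ)}) = (coth 1 / 4) λ (1 − ln λ)`; the first derivative of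
this function of `λ` vanishes at `λ = 1`, the second derivative there equals
`−coth 1 / 4 < 0`, and consequently the peakon `π` is not a local minimizer of
the energy `T + W` with respect to the `ℓ²` distance. -/
theorem peakon_derrick_scaling_instability :
    (∀ l : ℝ, 0 < l →
      Tkg (fun n => Real.sqrt l * pk n) + Wkg (fun n => Real.sqrt l * pk n)
        = (Lam / 4) * (l * (1 - Real.log l))) ∧
    deriv (fun l : ℝ => (Lam / 4) * (l * (1 - Real.log l))) 1 = 0 ∧
    deriv (deriv (fun l : ℝ => (Lam / 4) * (l * (1 - Real.log l)))) 1 = -Lam / 4 ∧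
    (-Lam / 4 < 0) ∧
    ¬ ∃ δ : ℝ, 0 < δ ∧ ∀ u : ℤ → ℝ,
        Summable (fun n : ℤ => (u n - pk n) ^ 2) →
        (∑' n : ℤ, (u n - pk n) ^ 2) < δ →
        Tkg pk + Wkg pk ≤ Tkg u + Wkg u := by
  have hE : (1:ℝ) < Real.exp 1 := exp_one_gt
  have hLam : 0 < Lam := by
    rw [Lam]; apply div_pos <;> nlinarith
  have hder : ∀ y : ℝ, y ≠ 0 → HasDerivAt
      (fun l : ℝ => (Lam / 4) * (l * (1 - Real.log l))) (-(Lam / 4) * Real.log y) y := by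
    intro y hy
    have h1 : HasDerivAt (fun l : ℝ => l * (1 - Real.log l))
        (1 * (1 - Real.log y) + y * (0 - y⁻¹)) y :=
      (hasDerivAt_id y).mul ((hasDerivAt_const y 1).sub (Real.hasDerivAt_log hy))
    have h2 := h1.const_mul (Lam / 4)
    refine h2.congr_deriv ?_
    rw [show y * (0 - y⁻¹) = -1 by rw [zero_sub, mul_neg, mul_inv_cancel₀ hy]]
    ring
  refine ⟨scaling_identity, ?_, ?_, ?_, ?_⟩
  · rw [(hder 1 one_ne_zero).deriv]
    simp
  · have hev : deriv (fun l : ℝ => (Lam / 4) * (l * (1 - Real.log l)))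
        =ᶠ[nhds 1] fun y => -(Lam / 4) * Real.log y := by
      filter_upwards [Ioi_mem_nhds (zero_lt_one)] with y hy
      exact (hder y (ne_of_gt hy)).deriv
    rw [hev.deriv_eq]
    have hd : HasDerivAt (fun y : ℝ => -(Lam / 4) * Real.log y) (-(Lam/4) * 1⁻¹) 1 :=
      (Real.hasDerivAt_log one_ne_zero).const_mul _
    rw [hd.deriv]; ring
  · linarith
  · rintro ⟨δ, hδ, h⟩
    set x : ℝ := Real.exp (-1) with hxdef
    have hx0 : (0:ℝ) ≤ x := (Real.exp_pos _).le
    have hx1 : x < 1 := by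
      rw [hxdef]; exact Real.exp_lt_one_iff.mpr (by norm_num)
    have hq0 : (0:ℝ) ≤ x ^ 2 := sq_nonneg x
    have hq1 : x ^ 2 < 1 := pkq1 hx0 hx1
    set t : ℝ := min 1 (δ / (Lam + 1)) with ht
    have ht0 : 0 < t := lt_min one_pos (div_pos hδ (by linarith))
    have ht1 : t ≤ 1 := min_le_left _ _
    have ht2 : t ≤ δ / (Lam + 1) := min_le_right _ _
    set l : ℝ := 1 + t with hldef
    have hl1 : 1 < l := by linarith
    have hl0 : 0 < l := by linarith
    -- base energy
    have hbase : Tkg pk + Wkg pk = Lam / 4 := by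
      have hid := scaling_identity 1 one_pos
      have hfun : (fun n : ℤ => Real.sqrt 1 * pk n) = pk := by
        funext n; rw [Real.sqrt_one, one_mul]
      rw [hfun] at hid
      simpa using hid
    -- the scaled competitor
    set u : ℤ → ℝ := fun n => Real.sqrt l * pk n with hu
    have hsl1 : 1 ≤ Real.sqrt l := Real.one_le_sqrt.mpr hl1.le
    have hsq : Real.sqrt l ^ 2 = l := Real.sq_sqrt hl0.le
    have hbound : (Real.sqrt l - 1) ^ 2 ≤ t := by nlinarith
    -- rewrite the distance summand
    have hterm : (fun n : ℤ => (u n - pk n) ^ 2)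
        = fun n : ℤ => (Real.sqrt l - 1) ^ 2 * (x ^ 2) ^ n.natAbs := by
      funext n
      simp only [hu, pk_eq, ← hxdef]
      ring
    have hsumm : Summable (fun n : ℤ => (u n - pk n) ^ 2) := by
      rw [hterm]
      exact ((pkz1 hq0 hq1).summable).mul_left _
    have htsum : (∑' n : ℤ, (u n - pk n) ^ 2) < δ := by
      rw [hterm, tsum_mul_left, (pkz1 hq0 hq1).tsum_eq, hxdef, ← lam_eq]
      have hd : t * (Lam + 1) ≤ δ :=
        (le_div_iff₀ (show (0:ℝ) < Lam + 1 by linarith)).mp ht2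
      nlinarith [mul_le_mul_of_nonneg_right hbound hLam.le]
    -- energy comparison
    have hlt : l * (1 - Real.log l) < 1 := by
      have hne1 : l⁻¹ ≠ 1 := by
        intro hc
        have : l = 1 := by
          field_simp at hc; linarith
        linarith
      have hlog := Real.log_lt_sub_one_of_pos (inv_pos.mpr hl0) hne1
      rw [Real.log_inv] at hlog
      have hinv : l * l⁻¹ = 1 := mul_inv_cancel₀ (ne_of_gt hl0)
      nlinarith [mul_lt_mul_of_pos_left hlog hl0]
    have henergy : Tkg u + Wkg u < Lam / 4 := by
      rw [hu, scaling_identity l hl0]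
      nlinarith [mul_lt_mul_of_pos_left hlt (show (0:ℝ) < Lam / 4 by linarith)]
    have hcontr := h u hsumm htsum
    rw [hbase] at hcontr
    linarith
end

section
/- Let Λ = (e²+1)/(e²−1), π_n = exp(−|n|), and define the operators H⁺ and H⁻ on ℓ²(ℤ, ℝ) by (H⁺u)_n = −∑_{m∈ℤ} exp(−|n−m|) u_m + (Λ − 1 + |n|) u_n and (H⁻u)_n = −∑_{m∈ℤ} exp(−|n−m|) u_m + (Λ + |n|) u_n. Then H⁺π = −π and H⁻π = 0; i.e., the peakon is an eigenvector of the linearization operator H⁺ with eigenvalue −1 and lies in the kernel of H⁻. -/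
/-- The operator `H⁺` of the linearization at the peakon:
`(H⁺u)_n = -∑_{m∈ℤ} exp (-|n-m|) u_m + (Λ - 1 + |n|) u_n`. -/
noncomputable def Hplus (u : ℤ → ℝ) (n : ℤ) : ℝ :=
  -(∑' m : ℤ, Real.exp (-|(n : ℝ) - (m : ℝ)|) * u m) + (Lam - 1 + |(n : ℝ)|) * u n

/-- The operator `H⁻`:
`(H⁻u)_n = -∑_{m∈ℤ} exp (-|n-m|) u_m + (Λ + |n|) u_n`. -/
noncomputable def Hminus (u : ℤ → ℝ) (n : ℤ) : ℝ :=
  -(∑' m : ℤ, Real.exp (-|(n : ℝ) - (m : ℝ)|) * u m) + (Lam + |(n : ℝ)|) * u n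

section

open Real

lemma exp_two_sub_one_ne_zero : exp 2 - 1 ≠ 0 :=
  sub_ne_zero.mpr (one_lt_exp_iff.mpr two_pos).ne'

lemma Lam_eq : Lam = 1 + 2 * (exp 2 - 1)⁻¹ := by
  have := exp_two_sub_one_ne_zero
  rw [Lam, exp_one_pow, Nat.cast_ofNat]
  field_simp
  ring

lemma hasSum_exp_neg_two_pow_succ :
    HasSum (fun k : ℕ => exp (-2) ^ (k + 1)) (exp 2 - 1)⁻¹ := by
  have geometric := (hasSum_geometric_of_lt_one (exp_pos (-2)).le
    (exp_lt_one_iff.mpr (by norm_num))).mul_left (exp (-2))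
  have value : exp (-2) * (1 - exp (-2))⁻¹ = (exp 2 - 1)⁻¹ := by
    have := exp_two_sub_one_ne_zero
    rw [exp_neg]
    field_simp
  rw [← value]
  exact geometric.congr_fun fun k => pow_succ' _ _

lemma exp_neg_add_two_mul_succ (x : ℝ) (k : ℕ) :
    exp (-(x + 2 * ((k : ℝ) + 1))) = exp (-x) * exp (-2) ^ (k + 1) := by
  rw [← exp_nat_mul, ← exp_add]
  congr 1
  push_cast
  ring

lemma hasSum_exp_neg_abs_sub_mul_exp_neg_abs_nat (n : ℕ) :
    HasSum (fun m : ℤ => exp (-|(n : ℝ) - m|) * exp (-|(m : ℝ)|))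
      (((n : ℝ) + 1 + 2 * (exp 2 - 1)⁻¹) * exp (-n)) := by
  set f : ℤ → ℝ := fun m => exp (-|(n : ℝ) - m|) * exp (-|(m : ℝ)|)
  have tail : HasSum (fun k : ℕ => exp (-n) * exp (-2) ^ (k + 1)) (exp (-n) * (exp 2 - 1)⁻¹) :=
    hasSum_exp_neg_two_pow_succ.mul_left _
  have left : HasSum (fun k : ℕ => f (-(k + 1))) (exp (-n) * (exp 2 - 1)⁻¹) := by
    refine tail.congr_fun fun k => ?_
    simp only [f, ← exp_add, ← neg_add, ← exp_neg_add_two_mul_succ]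
    congr 2
    push_cast
    rw [sub_neg_eq_add, abs_neg, abs_of_nonneg (by positivity), abs_of_nonneg (by positivity)]
    ring
  have right : HasSum (fun k : ℕ => f ((k + (n + 1) : ℕ) : ℤ)) (exp (-n) * (exp 2 - 1)⁻¹) := by
    refine tail.congr_fun fun k => ?_
    simp only [f, ← exp_add, ← neg_add, ← exp_neg_add_two_mul_succ]
    congr 2
    push_cast
    rw [abs_of_nonpos (by linarith [k.cast_nonneg (α := ℝ)]), abs_of_nonneg (by positivity)]
    ring
  have middle : ∑ i ∈ Finset.range (n + 1), f i = ((n : ℝ) + 1) * exp (-n) := by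
    rw [Finset.sum_congr rfl fun i hi => ?_, Finset.sum_const, Finset.card_range, nsmul_eq_mul]
    · push_cast
      rfl
    have hi : (i : ℝ) ≤ n := by exact_mod_cast Nat.lt_succ_iff.mp (Finset.mem_range.mp hi)
    simp only [f, ← exp_add, ← neg_add, Int.cast_natCast]
    rw [abs_of_nonneg (sub_nonneg.mpr hi), abs_of_nonneg i.cast_nonneg, sub_add_cancel]
  have nonneg := (hasSum_nat_add_iff (f := fun k : ℕ => f k) (n + 1)).mp right
  rw [middle] at nonneg
  have total := nonneg.of_nat_of_neg_add_one left
  rwa [show exp (-n) * (exp 2 - 1)⁻¹ + ((n : ℝ) + 1) * exp (-n) + exp (-n) * (exp 2 - 1)⁻¹ =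
    ((n : ℝ) + 1 + 2 * (exp 2 - 1)⁻¹) * exp (-n) by ring] at total

lemma hasSum_exp_neg_abs_sub_mul_exp_neg_abs (n : ℤ) :
    HasSum (fun m : ℤ => exp (-|(n : ℝ) - m|) * exp (-|(m : ℝ)|))
      ((Lam + |(n : ℝ)|) * exp (-|(n : ℝ)|)) := by
  have value (k : ℕ) :
      (Lam + |(k : ℝ)|) * exp (-|(k : ℝ)|) = ((k : ℝ) + 1 + 2 * (exp 2 - 1)⁻¹) * exp (-k) := by
    rw [Lam_eq, Nat.abs_cast]
    ring
  obtain ⟨k, rfl | rfl⟩ := Int.eq_nat_or_neg n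
  · simpa only [Int.cast_natCast, value] using hasSum_exp_neg_abs_sub_mul_exp_neg_abs_nat k
  · rw [Int.cast_neg, abs_neg, Int.cast_natCast, value]
    refine ((Equiv.neg ℤ).hasSum_iff.mpr (hasSum_exp_neg_abs_sub_mul_exp_neg_abs_nat k)).congr_fun
      fun m => ?_
    simp only [Function.comp_apply, Equiv.neg_apply, Int.cast_neg, abs_neg, sub_neg_eq_add]
    rw [← neg_add', abs_neg]

end

/-- The peakon `π ∈ ℓ²(ℤ, ℝ)`, `π_n = exp (-|n|)`, satisfies `H⁺π = -π` and
`H⁻π = 0`: it is an eigenvector of `H⁺` with eigenvalue `-1` and lies in the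
kernel of `H⁻`. -/
theorem peakon_eigenvector_of_linearization
    (π : lp (fun _ : ℤ => ℝ) 2) (hπ : ∀ n : ℤ, π n = Real.exp (-|(n : ℝ)|)) :
    (∀ n : ℤ, Hplus (fun m => π m) n = -(π n)) ∧
    (∀ n : ℤ, Hminus (fun m => π m) n = 0) := by
  have convolution (n : ℤ) :
      ∑' m : ℤ, Real.exp (-|(n : ℝ) - m|) * π m = (Lam + |(n : ℝ)|) * π n := by
    simp only [hπ]
    exact (hasSum_exp_neg_abs_sub_mul_exp_neg_abs n).tsum_eq
  refine ⟨fun n => ?_, fun n => ?_⟩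
  · rw [Hplus, convolution]
    ring
  · rw [Hminus, convolution]
    ring
end

section
/- Let u : [0,∞) → ℓ²(ℤ, ℝ) be twice continuously differentiable and solve the discrete Klein–Gordon lattice equation ü_n(t) = ∑_{m∈ℤ} exp(−|n−m|) u_m(t) − (Λ − (1/2) ln(u_n(t)²)) u_n(t) for all n and t, with the convention that the nonlinear term vanishes when u_n(t) = 0, and suppose the sequence (u_n(t) ln(u_n(t)²))_n lies in ℓ²(ℤ, ℝ) for each t. Then the energy E_{KG}(u(t), u̇(t)) = (1/2)‖u̇(t)‖_{ℓ²}² + T(u(t)) + W(u(t)) is constant in t. -/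
/-! ### Auxiliary kernel lemmas -/

open Filter MeasureTheory

noncomputable def Kf (p : ℤ × ℤ) : ℝ := Real.exp (-|(p.1 : ℝ) - (p.2 : ℝ)|)
noncomputable def Kc : ℝ := ∑' k : ℤ, Real.exp (-|(k : ℝ)|)

lemma Kf_nonneg (p : ℤ × ℤ) : 0 ≤ Kf p := (Real.exp_pos _).le

lemma Kf_def' (p : ℤ × ℤ) : Kf p = Real.exp (-|(p.1 : ℝ) - (p.2 : ℝ)|) := rfl

lemma Kf_symm (n m : ℤ) : Kf (n, m) = Kf (m, n) := by simp [Kf, abs_sub_comm]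

lemma Kf_swap (p : ℤ × ℤ) : Kf p.swap = Kf p := by
  obtain ⟨n, m⟩ := p
  exact (Kf_symm n m).symm

lemma summable_exp_abs_int : Summable (fun k : ℤ => Real.exp (-|(k:ℝ)|)) := by
  apply Summable.of_nat_of_neg <;> · simpa using Real.summable_exp_neg_nat

lemma Kf_eq (n m : ℤ) : Kf (n, m) = Real.exp (-|((n - m : ℤ) : ℝ)|) := by
  unfold Kf
  congr 2
  push_cast
  ring

lemma row_summable (n : ℤ) : Summable (fun m : ℤ => Kf (n, m)) := by
  have h := (Equiv.subLeft n).summable_iff.mpr summable_exp_abs_int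
  refine h.congr fun m => ?_
  rw [Function.comp_apply, Equiv.subLeft_apply, ← Kf_eq]

lemma row_tsum (n : ℤ) : ∑' m, Kf (n, m) = Kc := by
  rw [Kc, ← (Equiv.subLeft n).tsum_eq (fun k : ℤ => Real.exp (-|(k:ℝ)|))]
  refine tsum_congr fun m => ?_
  rw [Equiv.subLeft_apply, ← Kf_eq]

lemma Kc_nonneg : 0 ≤ Kc := tsum_nonneg fun _ => (Real.exp_pos _).le

lemma row_summable_sq {a : ℤ → ℝ} (n : ℤ) :
    Summable (fun m : ℤ => Kf (n, m) * a n ^ 2) :=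
  (row_summable n).mul_right _

lemma summable_K_sq_left {a : ℤ → ℝ} (ha : Summable fun n => a n ^ 2) :
    Summable (fun p : ℤ × ℤ => Kf p * a p.1 ^ 2) := by
  refine (summable_prod_of_nonneg ?_).mpr ⟨fun n => row_summable_sq n, ?_⟩
  · exact fun p => mul_nonneg (Kf_nonneg p) (sq_nonneg _)
  · refine Summable.congr (ha.mul_left Kc) fun n => ?_
    show Kc * a n ^ 2 = ∑' m, Kf (n, m) * a n ^ 2
    rw [tsum_mul_right, row_tsum]

lemma tsum_K_sq_left {a : ℤ → ℝ} (ha : Summable fun n => a n ^ 2) :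
    ∑' p : ℤ × ℤ, Kf p * a p.1 ^ 2 = Kc * ∑' n, a n ^ 2 := by
  have e := Summable.tsum_prod' (f := fun p : ℤ × ℤ => Kf p * a p.1 ^ 2) (summable_K_sq_left ha)
    (fun n => row_summable_sq n)
  rw [e, ← tsum_mul_left]
  refine tsum_congr fun n => ?_
  show (∑' m, Kf (n, m) * a n ^ 2) = Kc * a n ^ 2
  rw [tsum_mul_right, row_tsum]

lemma summable_K_sq_right {a : ℤ → ℝ} (ha : Summable fun n => a n ^ 2) :
    Summable (fun p : ℤ × ℤ => Kf p * a p.2 ^ 2) := by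
  have h := (Equiv.prodComm ℤ ℤ).summable_iff.mpr (summable_K_sq_left ha)
  refine h.congr fun p => ?_
  simp only [Function.comp_apply, Equiv.prodComm_apply, Prod.fst_swap]
  rw [Kf_swap]

lemma tsum_K_sq_right {a : ℤ → ℝ} (ha : Summable fun n => a n ^ 2) :
    ∑' p : ℤ × ℤ, Kf p * a p.2 ^ 2 = Kc * ∑' n, a n ^ 2 := by
  rw [← tsum_K_sq_left ha, ← (Equiv.prodComm ℤ ℤ).tsum_eq (fun p : ℤ × ℤ => Kf p * a p.1 ^ 2)]
  refine tsum_congr fun p => ?_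
  simp only [Equiv.prodComm_apply, Prod.fst_swap]
  rw [Kf_swap]

lemma abs_mul_abs_le {x y : ℝ} : |x| * |y| ≤ (x^2 + y^2)/2 := by
  nlinarith [sq_nonneg (|x| - |y|), sq_abs x, sq_abs y]

lemma K_absmul_le {a b : ℤ → ℝ} (p : ℤ × ℤ) :
    Kf p * (|a p.1| * |b p.2|) ≤ (1/2) * (Kf p * a p.1 ^ 2 + Kf p * b p.2 ^ 2) := by
  have h := abs_mul_abs_le (x := a p.1) (y := b p.2)
  nlinarith [Kf_nonneg p, abs_nonneg (a p.1), abs_nonneg (b p.2)]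

lemma summable_K_absmul {a b : ℤ → ℝ} (ha : Summable fun n => a n ^ 2)
    (hb : Summable fun n => b n ^ 2) :
    Summable (fun p : ℤ × ℤ => Kf p * (|a p.1| * |b p.2|)) := by
  refine Summable.of_nonneg_of_le
    (fun p => mul_nonneg (Kf_nonneg p) (mul_nonneg (abs_nonneg _) (abs_nonneg _)))
    K_absmul_le ?_
  exact (((summable_K_sq_left ha).add (summable_K_sq_right hb)).mul_left (1/2))

lemma tsum_K_absmul_le {a b : ℤ → ℝ} (ha : Summable fun n => a n ^ 2)
    (hb : Summable fun n => b n ^ 2) :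
    ∑' p : ℤ × ℤ, Kf p * (|a p.1| * |b p.2|)
      ≤ Kc / 2 * ((∑' n, a n ^ 2) + ∑' n, b n ^ 2) := by
  have h1 := Summable.tsum_le_tsum K_absmul_le (summable_K_absmul ha hb)
    (((summable_K_sq_left ha).add (summable_K_sq_right hb)).mul_left (1/2))
  calc ∑' p : ℤ × ℤ, Kf p * (|a p.1| * |b p.2|)
      ≤ ∑' p : ℤ × ℤ, (1/2) * (Kf p * a p.1 ^ 2 + Kf p * b p.2 ^ 2) := h1
    _ = (1/2) * ((∑' p : ℤ × ℤ, Kf p * a p.1 ^ 2) + ∑' p : ℤ × ℤ, Kf p * b p.2 ^ 2) := by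
        rw [tsum_mul_left, Summable.tsum_add (summable_K_sq_left ha) (summable_K_sq_right hb)]
    _ = Kc / 2 * ((∑' n, a n ^ 2) + ∑' n, b n ^ 2) := by
        rw [tsum_K_sq_left ha, tsum_K_sq_right hb]
        ring

lemma bdd_of_summable_sq {a : ℤ → ℝ} (ha : Summable fun n => a n ^ 2) (m : ℤ) :
    |a m| ≤ Real.sqrt (∑' k, a k ^ 2) := by
  rw [← Real.sqrt_sq_eq_abs]
  exact Real.sqrt_le_sqrt (Summable.le_tsum ha m fun k _ => sq_nonneg _)

lemma rowabs_summable {a : ℤ → ℝ} (ha : Summable fun n => a n ^ 2) (n : ℤ) :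
    Summable (fun m : ℤ => Kf (n, m) * |a m|) := by
  refine Summable.of_nonneg_of_le (fun m => mul_nonneg (Kf_nonneg _) (abs_nonneg _))
    (fun m => ?_) ((row_summable n).mul_right (Real.sqrt (∑' k, a k ^ 2)))
  exact mul_le_mul_of_nonneg_left (bdd_of_summable_sq ha m) (Kf_nonneg _)

lemma row_summable_of_sq {a : ℤ → ℝ} (ha : Summable fun n => a n ^ 2) (n : ℤ) :
    Summable (fun m : ℤ => Kf (n, m) * a m) := by
  refine Summable.of_abs (Summable.congr (rowabs_summable ha n) fun m => ?_)
  rw [abs_mul, abs_of_nonneg (Kf_nonneg _)]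

lemma summable_rowsum_mul {a b : ℤ → ℝ} (ha : Summable fun n => a n ^ 2)
    (hb : Summable fun n => b n ^ 2) :
    Summable (fun n : ℤ => (∑' m, Kf (n, m) * |a m|) * |b n|) := by
  have S := summable_K_absmul hb ha
  have marg := ((summable_prod_of_nonneg (fun p => mul_nonneg (Kf_nonneg p)
    (mul_nonneg (abs_nonneg _) (abs_nonneg _)))).mp S).2
  refine marg.congr fun n => ?_
  show (∑' m, Kf (n, m) * (|b n| * |a m|)) = (∑' m, Kf (n, m) * |a m|) * |b n|
  rw [← tsum_mul_right]
  exact tsum_congr fun m => by ring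

lemma tsum_rowsum_mul_le {a b : ℤ → ℝ} (ha : Summable fun n => a n ^ 2)
    (hb : Summable fun n => b n ^ 2) :
    ∑' n : ℤ, (∑' m, Kf (n, m) * |a m|) * |b n|
      ≤ Kc / 2 * ((∑' n, a n ^ 2) + ∑' n, b n ^ 2) := by
  have S := summable_K_absmul hb ha
  have rows : ∀ n : ℤ, Summable fun m : ℤ => Kf (n, m) * (|b n| * |a m|) :=
    fun n => ((summable_prod_of_nonneg (fun p => mul_nonneg (Kf_nonneg p)
      (mul_nonneg (abs_nonneg _) (abs_nonneg _)))).mp S).1 n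
  have e := Summable.tsum_prod' (f := fun p : ℤ × ℤ => Kf p * (|b p.1| * |a p.2|)) S rows
  have e2 : ∑' n : ℤ, (∑' m, Kf (n, m) * |a m|) * |b n|
      = ∑' p : ℤ × ℤ, Kf p * (|b p.1| * |a p.2|) := by
    rw [e]
    refine tsum_congr fun n => ?_
    show (∑' m, Kf (n, m) * |a m|) * |b n| = ∑' m, Kf (n, m) * (|b n| * |a m|)
    rw [← tsum_mul_right]
    exact tsum_congr fun m => by ring
  rw [e2]
  calc ∑' p : ℤ × ℤ, Kf p * (|b p.1| * |a p.2|)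
      ≤ Kc / 2 * ((∑' n, b n ^ 2) + ∑' n, a n ^ 2) := tsum_K_absmul_le hb ha
    _ = Kc / 2 * ((∑' n, a n ^ 2) + ∑' n, b n ^ 2) := by ring

lemma abs_rowsum_le {a : ℤ → ℝ} (ha : Summable fun n => a n ^ 2) (n : ℤ) :
    |∑' m, Kf (n, m) * a m| ≤ ∑' m, Kf (n, m) * |a m| := by
  have h := norm_tsum_le_tsum_norm (f := fun m : ℤ => Kf (n, m) * a m) ?_
  · rw [Real.norm_eq_abs] at h
    refine h.trans (le_of_eq (tsum_congr fun m => ?_))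
    rw [Real.norm_eq_abs, abs_mul, abs_of_nonneg (Kf_nonneg _)]
  · refine (rowabs_summable ha n).congr fun m => ?_
    rw [Real.norm_eq_abs, abs_mul, abs_of_nonneg (Kf_nonneg _)]

lemma summable_mul_of_sq {a b : ℤ → ℝ} (ha : Summable fun n => a n ^ 2)
    (hb : Summable fun n => b n ^ 2) :
    Summable (fun n => a n * b n) := by
  refine Summable.of_abs (Summable.of_nonneg_of_le (fun n => abs_nonneg _) (fun n => ?_)
    ((ha.add hb).mul_left (1/2)))
  rw [abs_mul]
  have := abs_mul_abs_le (x := a n) (y := b n)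
  linarith

lemma tsum_abs_mul_le {a b : ℤ → ℝ} (ha : Summable fun n => a n ^ 2)
    (hb : Summable fun n => b n ^ 2) :
    ∑' n, |a n * b n| ≤ ((∑' n, a n ^ 2) + ∑' n, b n ^ 2) / 2 := by
  have hs : Summable (fun n => |a n * b n|) := (summable_mul_of_sq ha hb).abs
  have h1 : ∀ n, |a n * b n| ≤ (1/2) * (a n ^ 2 + b n ^ 2) := fun n => by
    rw [abs_mul]
    have := abs_mul_abs_le (x := a n) (y := b n)
    linarith
  have h2 := Summable.tsum_le_tsum h1 hs ((ha.add hb).mul_left (1/2))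
  rw [tsum_mul_left, Summable.tsum_add ha hb] at h2
  linarith

lemma abs_tsum_le' {ι : Type*} {f : ι → ℝ} (h : Summable fun i => |f i|) :
    |∑' i, f i| ≤ ∑' i, |f i| := by
  have h2 := norm_tsum_le_tsum_norm (f := f) (by simpa [Real.norm_eq_abs] using h)
  simpa [Real.norm_eq_abs] using h2

/-! ### `ℓ²` lemmas -/

noncomputable abbrev l2Z := lp (fun _ : ℤ => ℝ) 2

lemma lp_summable_sq (x : l2Z) : Summable (fun n => (x n)^2) := by
  have := lp.summable_inner (𝕜 := ℝ) x x
  simpa [RCLike.inner_apply, sq] using this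

lemma lp_tsum_sq (x : l2Z) : ∑' n, (x n)^2 = ‖x‖^2 := by
  rw [← real_inner_self_eq_norm_sq, lp.inner_eq_tsum]
  simp [RCLike.inner_apply, sq]

lemma lp_summable_mul (x y : l2Z) : Summable (fun n => x n * y n) := by
  have := lp.summable_inner (𝕜 := ℝ) x y
  simpa [RCLike.inner_apply, mul_comm] using this

lemma lp_inner_tsum (x y : l2Z) : (inner ℝ x y : ℝ) = ∑' n, x n * y n := by
  rw [lp.inner_eq_tsum]; simp [RCLike.inner_apply, mul_comm]

noncomputable def evCLM (n : ℤ) : l2Z →L[ℝ] ℝ :=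
  LinearMap.mkContinuous
    { toFun := fun f => f n
      map_add' := fun f g => by simp [lp.coeFn_add]
      map_smul' := fun c f => by simp [lp.coeFn_smul] }
    1 (fun f => by
        rw [one_mul]; exact lp.norm_apply_le_norm (by norm_num : (2 : ENNReal) ≠ 0) f n)

@[simp] lemma evCLM_apply (n : ℤ) (f : l2Z) : evCLM n f = f n := rfl

lemma comp_hasDerivAt {u : ℝ → l2Z} {v : l2Z} {t : ℝ}
    (h : HasDerivAt u v t) (n : ℤ) :
    HasDerivAt (fun τ => u τ n) (v n) t :=
  ((evCLM n).hasFDerivAt.comp_hasDerivAt t h :)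

lemma comp_continuousOn {u : ℝ → l2Z} {s : Set ℝ} (h : ContinuousOn u s) (n : ℤ) :
    ContinuousOn (fun τ => u τ n) s :=
  (evCLM n).continuous.comp_continuousOn h

lemma memℓp_two_summable_sq {f : ℤ → ℝ} (hf : Memℓp f 2) : Summable fun n => f n ^ 2 := by
  have h := (memℓp_gen_iff (p := 2) (by norm_num)).mp hf
  refine h.congr fun n => ?_
  rw [show ((2 : ENNReal).toReal) = ((2 : ℕ) : ℝ) by norm_num, Real.rpow_natCast,
    Real.norm_eq_abs, sq_abs]

/-! ### scalar calculus lemmas -/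

lemma cont_xlogsq : Continuous (fun x : ℝ => x * Real.log (x^2)) := by
  have h : (fun x : ℝ => x * Real.log (x^2)) = fun x => -(2 * Real.negMulLog x) := by
    funext x
    simp [Real.negMulLog, Real.log_pow]
    ring
  rw [h]
  fun_prop

lemma hasDerivAt_sqlogsq (x : ℝ) :
    HasDerivAt (fun y : ℝ => y^2 * Real.log (y^2)) (2*x*Real.log (x^2) + 2*x) x := by
  rcases eq_or_ne x 0 with rfl | hx
  · simp only [Real.log_zero, mul_zero, zero_mul, zero_add]
    rw [hasDerivAt_iff_tendsto_slope]
    have h1 : Tendsto (fun y : ℝ => y * Real.log (y^2)) (nhdsWithin 0 {(0:ℝ)}ᶜ) (nhds 0) := by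
      have := cont_xlogsq.tendsto 0
      simpa using this.mono_left nhdsWithin_le_nhds
    refine h1.congr' ?_
    filter_upwards [self_mem_nhdsWithin] with y hy
    have hy' : (y:ℝ) ≠ 0 := hy
    rw [slope_def_field]
    field_simp
    ring
  · have hs : HasDerivAt (fun y : ℝ => y^2) (2*x) x := by simpa using hasDerivAt_pow 2 x
    have h1 : HasDerivAt (fun y : ℝ => Real.log (y^2)) (2*x / x^2) x :=
      hs.log (pow_ne_zero 2 hx)
    have h2 := hs.mul h1
    have h3 : 2*x * Real.log (x^2) + x^2 * (2*x/x^2) = 2*x*Real.log (x^2) + 2*x := by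
      field_simp
    rw [h3] at h2
    exact h2

lemma hasDerivAt_fW (x : ℝ) :
    HasDerivAt (fun y : ℝ => (Lam / 2 + 1 / 4) * y ^ 2 - (1 / 4) * (y ^ 2 * Real.log (y ^ 2)))
      (Lam * x - 1 / 2 * x * Real.log (x ^ 2)) x := by
  have hs : HasDerivAt (fun y : ℝ => y^2) (2*x) x := by simpa using hasDerivAt_pow 2 x
  have h := (hs.const_mul (Lam/2 + 1/4)).sub ((hasDerivAt_sqlogsq x).const_mul (1/4))
  exact h.congr_deriv (by ring)

lemma cont_fW : Continuous (fun x : ℝ => (Lam / 2 + 1 / 4) * x ^ 2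
    - (1 / 4) * (x ^ 2 * Real.log (x ^ 2))) := by
  have h : (fun x : ℝ => (Lam / 2 + 1 / 4) * x ^ 2 - (1 / 4) * (x ^ 2 * Real.log (x ^ 2)))
      = fun x => (Lam / 2 + 1 / 4) * x ^ 2 - (1 / 4) * (x * (x * Real.log (x ^ 2))) := by
    funext x; ring
  rw [h]
  exact ((continuous_const.mul (continuous_pow 2)).sub
    (continuous_const.mul (continuous_id.mul cont_xlogsq)))

lemma cont_fW' : Continuous (fun x : ℝ => Lam * x - 1 / 2 * x * Real.log (x ^ 2)) := by
  have h : (fun x : ℝ => Lam * x - 1 / 2 * x * Real.log (x ^ 2))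
      = fun x => Lam * x - 1 / 2 * (x * Real.log (x ^ 2)) := by funext x; ring
  rw [h]
  exact (continuous_const.mul continuous_id).sub (continuous_const.mul cont_xlogsq)

/-! ### measurability of pointwise series -/

lemma aesm_tsum {ι : Type*} [Countable ι] {f : ι → ℝ → ℝ} {μ : Measure ℝ}
    (hf : ∀ i, AEStronglyMeasurable (f i) μ)
    (hsum : ∀ᵐ s ∂μ, Summable (fun i => f i s)) :
    AEStronglyMeasurable (fun s => ∑' i, f i s) μ := by
  refine aestronglyMeasurable_of_tendsto_ae (atTop : Filter (Finset ι))
    (fun T : Finset ι => T.aestronglyMeasurable_sum (fun i _ => hf i)) ?_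
  filter_upwards [hsum] with s hs
  simp only [Finset.sum_apply]; exact hs.hasSum

/-! ### pointwise bounds and the pointwise energy identity -/

lemma abs_half_Kf (p : ℤ × ℤ) (A : ℝ) :
    |(-(1/2) * Kf p) * A| = 1/2 * (Kf p * |A|) := by
  have h : |(-(1/2) * Kf p)| = 1/2 * Kf p := by
    rw [abs_mul, abs_neg, abs_of_nonneg (Kf_nonneg p)]
    norm_num
  rw [abs_mul, h]
  ring

lemma summableW (x : l2Z) (hx : Memℓp (fun n : ℤ => x n * Real.log ((x n) ^ 2)) 2) :
    Summable (fun n : ℤ => (Lam / 2 + 1 / 4) * x n ^ 2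
      - (1 / 4) * (x n ^ 2 * Real.log (x n ^ 2))) := by
  have h1 := lp_summable_sq x
  have h2 := memℓp_two_summable_sq hx
  have h3 : Summable (fun n => x n ^ 2 * Real.log (x n ^ 2)) := by
    refine (summable_mul_of_sq h1 h2).congr fun n => ?_
    ring
  exact (h1.mul_left _).sub (h3.mul_left _)

lemma Wkg_eq (x : l2Z) : Wkg (fun n => x n)
    = ∑' n : ℤ, ((Lam / 2 + 1 / 4) * x n ^ 2 - (1 / 4) * (x n ^ 2 * Real.log (x n ^ 2))) := rfl

lemma Tkg_eq (x : l2Z) :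
    Tkg (fun n => x n) = ∑' p : ℤ × ℤ, (-(1/2) * Kf p) * (x p.1 * x p.2) := by
  show -(1 / 2) * ∑' p : ℤ × ℤ, Real.exp (-|(p.1 : ℝ) - (p.2 : ℝ)|) * x p.1 * x p.2 = _
  rw [← tsum_mul_left]
  refine tsum_congr fun p => ?_
  rw [Kf_def']
  ring

lemma summableT (x : l2Z) :
    Summable (fun p : ℤ × ℤ => (-(1/2) * Kf p) * (x p.1 * x p.2)) := by
  have h := summable_K_absmul (lp_summable_sq x) (lp_summable_sq x)
  refine Summable.of_abs (Summable.of_nonneg_of_le (fun p => abs_nonneg _) (fun p => ?_)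
    (h.mul_left (1/2)))
  rw [abs_half_Kf, abs_mul]

lemma boundT (x y : l2Z) :
    Summable (fun p : ℤ × ℤ => |(-(1/2) * Kf p) * (y p.1 * x p.2 + x p.1 * y p.2)|) ∧
    ∑' p : ℤ × ℤ, |(-(1/2) * Kf p) * (y p.1 * x p.2 + x p.1 * y p.2)|
      ≤ Kc / 2 * (‖x‖ ^ 2 + ‖y‖ ^ 2) := by
  have hx2 := lp_summable_sq x
  have hy2 := lp_summable_sq y
  have hMsum : Summable (fun p : ℤ × ℤ =>
      (1/2) * (Kf p * (|y p.1| * |x p.2|) + Kf p * (|x p.1| * |y p.2|))) :=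
    ((summable_K_absmul hy2 hx2).add (summable_K_absmul hx2 hy2)).mul_left _
  have hle : ∀ p : ℤ × ℤ, |(-(1/2) * Kf p) * (y p.1 * x p.2 + x p.1 * y p.2)|
      ≤ (1/2) * (Kf p * (|y p.1| * |x p.2|) + Kf p * (|x p.1| * |y p.2|)) := by
    intro p
    rw [abs_half_Kf]
    have h1 : |y p.1 * x p.2 + x p.1 * y p.2| ≤ |y p.1| * |x p.2| + |x p.1| * |y p.2| := by
      refine (abs_add_le _ _).trans ?_
      rw [abs_mul, abs_mul]
    nlinarith [Kf_nonneg p, abs_nonneg (y p.1 * x p.2 + x p.1 * y p.2)]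
  have hsum : Summable (fun p : ℤ × ℤ =>
      |(-(1/2) * Kf p) * (y p.1 * x p.2 + x p.1 * y p.2)|) :=
    Summable.of_nonneg_of_le (fun p => abs_nonneg _) hle hMsum
  refine ⟨hsum, ?_⟩
  have h2 := Summable.tsum_le_tsum hle hsum hMsum
  have h3 : ∑' p : ℤ × ℤ, (1/2) * (Kf p * (|y p.1| * |x p.2|) + Kf p * (|x p.1| * |y p.2|))
      = (1/2) * ((∑' p : ℤ × ℤ, Kf p * (|y p.1| * |x p.2|))
        + ∑' p : ℤ × ℤ, Kf p * (|x p.1| * |y p.2|)) := by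
    rw [tsum_mul_left, Summable.tsum_add (summable_K_absmul hy2 hx2) (summable_K_absmul hx2 hy2)]
  have h4 := tsum_K_absmul_le hy2 hx2
  have h5 := tsum_K_absmul_le hx2 hy2
  have ex := lp_tsum_sq x
  have ey := lp_tsum_sq y
  rw [ex, ey] at h4 h5
  linarith

lemma boundW (x y z : l2Z)
    (hlog : Memℓp (fun n : ℤ => x n * Real.log ((x n) ^ 2)) 2)
    (heq : ∀ n : ℤ, Lam * x n - 1 / 2 * x n * Real.log (x n ^ 2)
      = (∑' m, Kf (n, m) * x m) - z n) :
    Summable (fun n : ℤ => |(Lam * x n - 1 / 2 * x n * Real.log (x n ^ 2)) * y n|) ∧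
    ∑' n : ℤ, |(Lam * x n - 1 / 2 * x n * Real.log (x n ^ 2)) * y n|
      ≤ Kc / 2 * (‖x‖ ^ 2 + ‖y‖ ^ 2) + (‖z‖ ^ 2 + ‖y‖ ^ 2) / 2 := by
  have hx2 := lp_summable_sq x
  have hy2 := lp_summable_sq y
  have hz2 := lp_summable_sq z
  have hMsum : Summable (fun n : ℤ => (∑' m, Kf (n, m) * |x m|) * |y n| + |z n * y n|) :=
    (summable_rowsum_mul hx2 hy2).add (summable_mul_of_sq hz2 hy2).abs
  have hle : ∀ n : ℤ, |(Lam * x n - 1 / 2 * x n * Real.log (x n ^ 2)) * y n|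
      ≤ (∑' m, Kf (n, m) * |x m|) * |y n| + |z n * y n| := by
    intro n
    rw [heq n, abs_mul]
    have h1 : |(∑' m, Kf (n, m) * x m) - z n| ≤ (∑' m, Kf (n, m) * |x m|) + |z n| :=
      (abs_sub _ _).trans (add_le_add_left (abs_rowsum_le hx2 n) _)
    calc |(∑' m, Kf (n, m) * x m) - z n| * |y n|
        ≤ ((∑' m, Kf (n, m) * |x m|) + |z n|) * |y n| :=
          mul_le_mul_of_nonneg_right h1 (abs_nonneg _)
      _ = (∑' m, Kf (n, m) * |x m|) * |y n| + |z n * y n| := by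
          rw [abs_mul]; ring
  have hsum : Summable (fun n : ℤ => |(Lam * x n - 1 / 2 * x n * Real.log (x n ^ 2)) * y n|) :=
    Summable.of_nonneg_of_le (fun n => abs_nonneg _) hle hMsum
  refine ⟨hsum, ?_⟩
  have h2 := Summable.tsum_le_tsum hle hsum hMsum
  have h3 : ∑' n : ℤ, ((∑' m, Kf (n, m) * |x m|) * |y n| + |z n * y n|)
      = (∑' n : ℤ, (∑' m, Kf (n, m) * |x m|) * |y n|) + ∑' n : ℤ, |z n * y n| :=
    Summable.tsum_add (summable_rowsum_mul hx2 hy2) (summable_mul_of_sq hz2 hy2).abs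
  have h4 := tsum_rowsum_mul_le hx2 hy2
  have h5 := tsum_abs_mul_le hz2 hy2
  have ex := lp_tsum_sq x
  have ey := lp_tsum_sq y
  have ez := lp_tsum_sq z
  rw [ex, ey] at h4
  rw [ez, ey] at h5
  linarith

lemma pointD (x y z : l2Z)
    (heq : ∀ n : ℤ, Lam * x n - 1 / 2 * x n * Real.log (x n ^ 2)
      = (∑' m, Kf (n, m) * x m) - z n) :
    (inner ℝ z y : ℝ)
      + (∑' p : ℤ × ℤ, (-(1/2) * Kf p) * (y p.1 * x p.2 + x p.1 * y p.2))
      + (∑' n : ℤ, (Lam * x n - 1 / 2 * x n * Real.log (x n ^ 2)) * y n) = 0 := by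
  have hx2 := lp_summable_sq x
  have hy2 := lp_summable_sq y
  have hz2 := lp_summable_sq z
  -- summability of the two halves of the `T` series
  have SA : Summable (fun p : ℤ × ℤ => Kf p * (y p.1 * x p.2)) := by
    refine Summable.of_abs (Summable.congr (summable_K_absmul hy2 hx2) fun p => ?_)
    rw [abs_mul, abs_of_nonneg (Kf_nonneg p), abs_mul]
  have SB : Summable (fun p : ℤ × ℤ => Kf p * (x p.1 * y p.2)) := by
    refine Summable.of_abs (Summable.congr (summable_K_absmul hx2 hy2) fun p => ?_)
    rw [abs_mul, abs_of_nonneg (Kf_nonneg p), abs_mul]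
  -- split the double series
  have hsplit : (∑' p : ℤ × ℤ, (-(1/2) * Kf p) * (y p.1 * x p.2 + x p.1 * y p.2))
      = -(1/2) * (∑' p : ℤ × ℤ, Kf p * (y p.1 * x p.2))
        + -(1/2) * (∑' p : ℤ × ℤ, Kf p * (x p.1 * y p.2)) := by
    rw [← tsum_mul_left, ← tsum_mul_left,
      ← Summable.tsum_add ((SA).mul_left (-(1/2))) ((SB).mul_left (-(1/2)))]
    exact tsum_congr fun p => by ring
  -- the two halves are equal by symmetry
  have hswap : (∑' p : ℤ × ℤ, Kf p * (x p.1 * y p.2))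
      = ∑' p : ℤ × ℤ, Kf p * (y p.1 * x p.2) := by
    rw [← (Equiv.prodComm ℤ ℤ).tsum_eq (fun p : ℤ × ℤ => Kf p * (y p.1 * x p.2))]
    refine tsum_congr fun p => ?_
    simp only [Equiv.prodComm_apply, Prod.fst_swap, Prod.snd_swap]
    rw [Kf_swap]
    ring
  -- Fubini for the first half
  have rows : ∀ n : ℤ, Summable (fun m : ℤ => Kf (n, m) * (y n * x m)) := by
    intro n
    refine Summable.congr ((row_summable_of_sq hx2 n).mul_left (y n)) fun m => ?_
    ring
  have hfub : (∑' p : ℤ × ℤ, Kf p * (y p.1 * x p.2))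
      = ∑' n : ℤ, (∑' m, Kf (n, m) * x m) * y n := by
    have e := Summable.tsum_prod' (f := fun p : ℤ × ℤ => Kf p * (y p.1 * x p.2)) SA rows
    rw [e]
    refine tsum_congr fun n => ?_
    show (∑' m, Kf (n, m) * (y n * x m)) = (∑' m, Kf (n, m) * x m) * y n
    rw [← tsum_mul_right]
    exact tsum_congr fun m => by ring
  -- summability of the `Au · y` and `z · y` series
  have SAuy : Summable (fun n : ℤ => (∑' m, Kf (n, m) * x m) * y n) := by
    refine Summable.of_abs (Summable.of_nonneg_of_le (fun n => abs_nonneg _) (fun n => ?_)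
      (summable_rowsum_mul hx2 hy2))
    rw [abs_mul]
    exact mul_le_mul_of_nonneg_right (abs_rowsum_le hx2 n) (abs_nonneg _)
  have Szy : Summable (fun n : ℤ => z n * y n) := summable_mul_of_sq hz2 hy2
  -- the W series
  have hW : (∑' n : ℤ, (Lam * x n - 1 / 2 * x n * Real.log (x n ^ 2)) * y n)
      = (∑' n : ℤ, (∑' m, Kf (n, m) * x m) * y n) - ∑' n : ℤ, z n * y n := by
    rw [← Summable.tsum_sub SAuy Szy]
    refine tsum_congr fun n => ?_
    rw [heq n]
    ring
  have hz : (inner ℝ z y : ℝ) = ∑' n : ℤ, z n * y n := lp_inner_tsum z y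
  rw [hsplit, hswap, hfub, hW, hz]
  ring

/-! ### fundamental theorem of calculus pieces -/

lemma ftc3 (u v : ℝ → l2Z) {t₁ t₂ : ℝ}
    (hud : ∀ t ∈ Set.Ici (0:ℝ), HasDerivWithinAt u (v t) (Set.Ici 0) t)
    (hucont : ContinuousOn u (Set.Ici 0)) (hvcont : ContinuousOn v (Set.Ici 0))
    (ht₁ : 0 ≤ t₁) (hle : t₁ ≤ t₂) (n : ℤ) :
    ((Lam / 2 + 1 / 4) * u t₂ n ^ 2 - (1 / 4) * (u t₂ n ^ 2 * Real.log (u t₂ n ^ 2)))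
      - ((Lam / 2 + 1 / 4) * u t₁ n ^ 2 - (1 / 4) * (u t₁ n ^ 2 * Real.log (u t₁ n ^ 2)))
      = ∫ s in Set.Ioc t₁ t₂, (Lam * u s n - 1 / 2 * u s n * Real.log (u s n ^ 2)) * v s n := by
  have hJI : Set.Icc t₁ t₂ ⊆ Set.Ici (0:ℝ) := fun x hx => le_trans ht₁ hx.1
  have hcont : ContinuousOn (fun s => (Lam / 2 + 1 / 4) * u s n ^ 2
      - (1 / 4) * (u s n ^ 2 * Real.log (u s n ^ 2))) (Set.Icc t₁ t₂) :=
    cont_fW.comp_continuousOn (comp_continuousOn (hucont.mono hJI) n)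
  have hder : ∀ s ∈ Set.Ioo t₁ t₂,
      HasDerivWithinAt (fun s => (Lam / 2 + 1 / 4) * u s n ^ 2
        - (1 / 4) * (u s n ^ 2 * Real.log (u s n ^ 2)))
        ((Lam * u s n - 1 / 2 * u s n * Real.log (u s n ^ 2)) * v s n) (Set.Ioi s) s := by
    intro s hs
    have hspos : (0:ℝ) < s := lt_of_le_of_lt ht₁ hs.1
    have h1 : HasDerivAt u (v s) s := (hud s hspos.le).hasDerivAt (Ici_mem_nhds hspos)
    have h2 : HasDerivAt (fun τ => u τ n) (v s n) s := comp_hasDerivAt h1 n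
    exact ((hasDerivAt_fW (u s n)).comp s h2).hasDerivWithinAt
  have hint : IntervalIntegrable
      (fun s => (Lam * u s n - 1 / 2 * u s n * Real.log (u s n ^ 2)) * v s n)
      MeasureTheory.volume t₁ t₂ := by
    apply ContinuousOn.intervalIntegrable
    rw [Set.uIcc_of_le hle]
    exact (cont_fW'.comp_continuousOn (comp_continuousOn (hucont.mono hJI) n)).mul
      (comp_continuousOn (hvcont.mono hJI) n)
  have h := intervalIntegral.integral_eq_sub_of_hasDeriv_right_of_le hle hcont hder hint
  rw [intervalIntegral.integral_of_le hle] at h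
  linarith

lemma ftc2 (u v : ℝ → l2Z) {t₁ t₂ : ℝ}
    (hud : ∀ t ∈ Set.Ici (0:ℝ), HasDerivWithinAt u (v t) (Set.Ici 0) t)
    (hucont : ContinuousOn u (Set.Ici 0)) (hvcont : ContinuousOn v (Set.Ici 0))
    (ht₁ : 0 ≤ t₁) (hle : t₁ ≤ t₂) (p : ℤ × ℤ) :
    (-(1/2) * Kf p) * (u t₂ p.1 * u t₂ p.2) - (-(1/2) * Kf p) * (u t₁ p.1 * u t₁ p.2)
      = ∫ s in Set.Ioc t₁ t₂, (-(1/2) * Kf p) * (v s p.1 * u s p.2 + u s p.1 * v s p.2) := by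
  have hJI : Set.Icc t₁ t₂ ⊆ Set.Ici (0:ℝ) := fun x hx => le_trans ht₁ hx.1
  have hcont : ContinuousOn (fun s => (-(1/2) * Kf p) * (u s p.1 * u s p.2)) (Set.Icc t₁ t₂) :=
    continuousOn_const.mul ((comp_continuousOn (hucont.mono hJI) p.1).mul
      (comp_continuousOn (hucont.mono hJI) p.2))
  have hder : ∀ s ∈ Set.Ioo t₁ t₂,
      HasDerivWithinAt (fun s => (-(1/2) * Kf p) * (u s p.1 * u s p.2))
        ((-(1/2) * Kf p) * (v s p.1 * u s p.2 + u s p.1 * v s p.2)) (Set.Ioi s) s := by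
    intro s hs
    have hspos : (0:ℝ) < s := lt_of_le_of_lt ht₁ hs.1
    have h1 : HasDerivAt u (v s) s := (hud s hspos.le).hasDerivAt (Ici_mem_nhds hspos)
    have h2 := (comp_hasDerivAt h1 p.1).mul (comp_hasDerivAt h1 p.2)
    exact (h2.const_mul _).hasDerivWithinAt
  have hint : IntervalIntegrable
      (fun s => (-(1/2) * Kf p) * (v s p.1 * u s p.2 + u s p.1 * v s p.2))
      MeasureTheory.volume t₁ t₂ := by
    apply ContinuousOn.intervalIntegrable
    rw [Set.uIcc_of_le hle]
    exact continuousOn_const.mul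
      (((comp_continuousOn (hvcont.mono hJI) p.1).mul (comp_continuousOn (hucont.mono hJI) p.2)).add
        ((comp_continuousOn (hucont.mono hJI) p.1).mul (comp_continuousOn (hvcont.mono hJI) p.2)))
  have h := intervalIntegral.integral_eq_sub_of_hasDeriv_right_of_le hle hcont hder hint
  rw [intervalIntegral.integral_of_le hle] at h
  linarith

lemma claimA (v w : ℝ → l2Z) {t₁ t₂ : ℝ}
    (hvd : ∀ t ∈ Set.Ici (0:ℝ), HasDerivWithinAt v (w t) (Set.Ici 0) t)
    (hvcont : ContinuousOn v (Set.Ici 0)) (hwcont : ContinuousOn w (Set.Ici 0))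
    (ht₁ : 0 ≤ t₁) (hle : t₁ ≤ t₂) :
    (1 / 2) * ‖v t₂‖ ^ 2 - (1 / 2) * ‖v t₁‖ ^ 2
      = ∫ s in Set.Ioc t₁ t₂, (inner ℝ (w s) (v s) : ℝ) := by
  have hJI : Set.Icc t₁ t₂ ⊆ Set.Ici (0:ℝ) := fun x hx => le_trans ht₁ hx.1
  have hcont : ContinuousOn (fun s => (1 / 2 : ℝ) * (inner ℝ (v s) (v s) : ℝ)) (Set.Icc t₁ t₂) :=
    continuousOn_const.mul ((hvcont.mono hJI).inner (hvcont.mono hJI))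
  have hder : ∀ s ∈ Set.Ioo t₁ t₂,
      HasDerivWithinAt (fun s => (1 / 2 : ℝ) * (inner ℝ (v s) (v s) : ℝ))
        ((inner ℝ (w s) (v s) : ℝ)) (Set.Ioi s) s := by
    intro s hs
    have hspos : (0:ℝ) < s := lt_of_le_of_lt ht₁ hs.1
    have h1 : HasDerivAt v (w s) s := (hvd s hspos.le).hasDerivAt (Ici_mem_nhds hspos)
    have h2 := HasDerivAt.inner ℝ h1 h1
    have h3 := h2.const_mul (1 / 2 : ℝ)
    have h4 : (1 / 2 : ℝ) * ((inner ℝ (v s) (w s) : ℝ) + (inner ℝ (w s) (v s) : ℝ))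
        = (inner ℝ (w s) (v s) : ℝ) := by
      rw [real_inner_comm (v s) (w s)]
      ring
    rw [h4] at h3
    exact h3.hasDerivWithinAt
  have hint : IntervalIntegrable (fun s => (inner ℝ (w s) (v s) : ℝ))
      MeasureTheory.volume t₁ t₂ := by
    apply ContinuousOn.intervalIntegrable
    rw [Set.uIcc_of_le hle]
    exact (hwcont.mono hJI).inner (hvcont.mono hJI)
  have h := intervalIntegral.integral_eq_sub_of_hasDeriv_right_of_le hle hcont hder hint
  rw [intervalIntegral.integral_of_le hle] at h
  have e1 : (inner ℝ (v t₁) (v t₁) : ℝ) = ‖v t₁‖ ^ 2 := real_inner_self_eq_norm_sq _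
  have e2 : (inner ℝ (v t₂) (v t₂) : ℝ) = ‖v t₂‖ ^ 2 := real_inner_self_eq_norm_sq _
  rw [e1, e2] at h
  linarith


lemma fin_of_bound {ι : Type*} [Countable ι] {f : ι → ℝ → ℝ} {t₁ t₂ : ℝ} {C : ℝ}
    (hmeas : ∀ i, AEStronglyMeasurable (f i) (volume.restrict (Set.Ioc t₁ t₂)))
    (hbd : ∀ s ∈ Set.Ioc t₁ t₂, Summable (fun i => |f i s|) ∧ ∑' i, |f i s| ≤ C) :
    ∑' i, ∫⁻ s, ‖f i s‖ₑ ∂(volume.restrict (Set.Ioc t₁ t₂)) ≠ ⊤ := by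
  rw [← lintegral_tsum (fun i => (hmeas i).enorm)]
  have hb : ∀ᵐ s ∂(volume.restrict (Set.Ioc t₁ t₂)),
      (∑' i, ‖f i s‖ₑ) ≤ ENNReal.ofReal C := by
    rw [ae_restrict_iff' measurableSet_Ioc]
    refine MeasureTheory.ae_of_all _ fun s hs => ?_
    obtain ⟨h1, h2⟩ := hbd s hs
    have e : (∑' i, ‖f i s‖ₑ) = ENNReal.ofReal (∑' i, |f i s|) := by
      rw [ENNReal.ofReal_tsum_of_nonneg (fun i => abs_nonneg _) h1]
      refine tsum_congr fun i => ?_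
      rw [← Real.norm_eq_abs, ofReal_norm_eq_enorm]
    rw [e]
    exact ENNReal.ofReal_le_ofReal h2
  refine ne_of_lt (lt_of_le_of_lt (lintegral_mono_ae hb) ?_)
  rw [lintegral_const, MeasureTheory.Measure.restrict_apply_univ]
  exact ENNReal.mul_lt_top ENNReal.ofReal_lt_top measure_Ioc_lt_top

lemma integrable_of_bound {ι : Type*} [Countable ι] {f : ι → ℝ → ℝ} {t₁ t₂ : ℝ} {C : ℝ}
    (hmeas : ∀ i, AEStronglyMeasurable (f i) (volume.restrict (Set.Ioc t₁ t₂)))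
    (hbd : ∀ s ∈ Set.Ioc t₁ t₂, Summable (fun i => |f i s|) ∧ ∑' i, |f i s| ≤ C) :
    Integrable (fun s => ∑' i, f i s) (volume.restrict (Set.Ioc t₁ t₂)) := by
  have hC : Integrable (fun _ : ℝ => C) (volume.restrict (Set.Ioc t₁ t₂)) := by
    refine MeasureTheory.integrableOn_const measure_Ioc_lt_top.ne
  refine Integrable.mono' hC (aesm_tsum hmeas ?_) ?_
  · rw [ae_restrict_iff' measurableSet_Ioc]
    exact MeasureTheory.ae_of_all _ fun s hs => ((hbd s hs).1).of_abs
  · rw [ae_restrict_iff' measurableSet_Ioc]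
    refine MeasureTheory.ae_of_all _ fun s hs => ?_
    obtain ⟨h1, h2⟩ := hbd s hs
    rw [Real.norm_eq_abs]
    exact (abs_tsum_le' h1).trans h2

/-! ### main auxiliary lemma -/

lemma kg_aux (u v w : ℝ → l2Z)
    (hud : ∀ t ∈ Set.Ici (0:ℝ), HasDerivWithinAt u (v t) (Set.Ici 0) t)
    (hvd : ∀ t ∈ Set.Ici (0:ℝ), HasDerivWithinAt v (w t) (Set.Ici 0) t)
    (hucont : ContinuousOn u (Set.Ici 0))
    (hvcont : ContinuousOn v (Set.Ici 0))
    (hwcont : ContinuousOn w (Set.Ici 0))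
    (hlog : ∀ t ∈ Set.Ici (0:ℝ), Memℓp (fun n : ℤ => u t n * Real.log ((u t n) ^ 2)) 2)
    (heqn : ∀ t ∈ Set.Ici (0:ℝ), ∀ n : ℤ,
      w t n = (∑' m : ℤ, Real.exp (-|(n : ℝ) - (m : ℝ)|) * u t m)
        - (Lam - (1 / 2) * Real.log ((u t n) ^ 2)) * u t n)
    {t₁ t₂ : ℝ} (ht₁ : (0:ℝ) ≤ t₁) (ht₂ : (0:ℝ) ≤ t₂) (hle : t₁ ≤ t₂) :
    (1 / 2) * ‖v t₁‖ ^ 2 + Tkg (fun n => u t₁ n) + Wkg (fun n => u t₁ n)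
      = (1 / 2) * ‖v t₂‖ ^ 2 + Tkg (fun n => u t₂ n) + Wkg (fun n => u t₂ n) := by
  have hJI : Set.Icc t₁ t₂ ⊆ Set.Ici (0:ℝ) := fun x hx => le_trans ht₁ hx.1
  have hIocI : Set.Ioc t₁ t₂ ⊆ Set.Ici (0:ℝ) := fun x hx => le_trans ht₁ hx.1.le
  -- the rewritten equation of motion
  have heq' : ∀ s ∈ Set.Ici (0:ℝ), ∀ n : ℤ,
      Lam * u s n - 1 / 2 * u s n * Real.log (u s n ^ 2)
        = (∑' m, Kf (n, m) * u s m) - w s n := by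
    intro s hs n
    have h := heqn s hs n
    have hA : (∑' m : ℤ, Real.exp (-|(n : ℝ) - (m : ℝ)|) * u s m)
        = ∑' m, Kf (n, m) * u s m := rfl
    rw [hA] at h
    rw [h]
    ring
  -- bounds on the compact interval
  obtain ⟨Bu, hBu⟩ := isCompact_Icc.exists_bound_of_continuousOn (hucont.mono hJI)
  obtain ⟨Bv, hBv⟩ := isCompact_Icc.exists_bound_of_continuousOn (hvcont.mono hJI)
  obtain ⟨Bw, hBw⟩ := isCompact_Icc.exists_bound_of_continuousOn (hwcont.mono hJI)
  -- measurability of the series terms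
  have hmeas3 : ∀ n : ℤ, AEStronglyMeasurable
      (fun s => (Lam * u s n - 1 / 2 * u s n * Real.log (u s n ^ 2)) * v s n)
      (volume.restrict (Set.Ioc t₁ t₂)) := by
    intro n
    refine ContinuousOn.aestronglyMeasurable ?_ measurableSet_Ioc
    exact (cont_fW'.comp_continuousOn (comp_continuousOn (hucont.mono hIocI) n)).mul
      (comp_continuousOn (hvcont.mono hIocI) n)
  have hmeas2 : ∀ p : ℤ × ℤ, AEStronglyMeasurable
      (fun s => (-(1/2) * Kf p) * (v s p.1 * u s p.2 + u s p.1 * v s p.2))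
      (volume.restrict (Set.Ioc t₁ t₂)) := by
    intro p
    refine ContinuousOn.aestronglyMeasurable ?_ measurableSet_Ioc
    exact continuousOn_const.mul
      (((comp_continuousOn (hvcont.mono hIocI) p.1).mul
          (comp_continuousOn (hucont.mono hIocI) p.2)).add
        ((comp_continuousOn (hucont.mono hIocI) p.1).mul
          (comp_continuousOn (hvcont.mono hIocI) p.2)))
  -- pointwise summability and bounds
  have hbd3 : ∀ s ∈ Set.Ioc t₁ t₂,
      Summable (fun n : ℤ => |(Lam * u s n - 1 / 2 * u s n * Real.log (u s n ^ 2)) * v s n|) ∧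
      ∑' n : ℤ, |(Lam * u s n - 1 / 2 * u s n * Real.log (u s n ^ 2)) * v s n|
        ≤ Kc / 2 * (Bu ^ 2 + Bv ^ 2) + (Bw ^ 2 + Bv ^ 2) / 2 := by
    intro s hs
    have hsI : s ∈ Set.Ici (0:ℝ) := hIocI hs
    have hsJ : s ∈ Set.Icc t₁ t₂ := Set.Ioc_subset_Icc_self hs
    obtain ⟨h1, h2⟩ := boundW (u s) (v s) (w s) (hlog s hsI) (heq' s hsI)
    refine ⟨h1, h2.trans ?_⟩
    have hu1 : ‖u s‖ ^ 2 ≤ Bu ^ 2 := pow_le_pow_left₀ (norm_nonneg _) (hBu s hsJ) 2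
    have hv1 : ‖v s‖ ^ 2 ≤ Bv ^ 2 := pow_le_pow_left₀ (norm_nonneg _) (hBv s hsJ) 2
    have hw1 : ‖w s‖ ^ 2 ≤ Bw ^ 2 := pow_le_pow_left₀ (norm_nonneg _) (hBw s hsJ) 2
    have hKc := Kc_nonneg
    nlinarith
  have hbd2 : ∀ s ∈ Set.Ioc t₁ t₂,
      Summable (fun p : ℤ × ℤ =>
        |(-(1/2) * Kf p) * (v s p.1 * u s p.2 + u s p.1 * v s p.2)|) ∧
      ∑' p : ℤ × ℤ, |(-(1/2) * Kf p) * (v s p.1 * u s p.2 + u s p.1 * v s p.2)|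
        ≤ Kc / 2 * (Bu ^ 2 + Bv ^ 2) := by
    intro s hs
    have hsJ : s ∈ Set.Icc t₁ t₂ := Set.Ioc_subset_Icc_self hs
    obtain ⟨h1, h2⟩ := boundT (u s) (v s)
    refine ⟨h1, h2.trans ?_⟩
    have hu1 : ‖u s‖ ^ 2 ≤ Bu ^ 2 := pow_le_pow_left₀ (norm_nonneg _) (hBu s hsJ) 2
    have hv1 : ‖v s‖ ^ 2 ≤ Bv ^ 2 := pow_le_pow_left₀ (norm_nonneg _) (hBv s hsJ) 2
    have hKc := Kc_nonneg
    nlinarith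
  -- the three increments as integrals over `Ioc t₁ t₂`
  have hW : Wkg (fun n => u t₂ n) - Wkg (fun n => u t₁ n)
      = ∫ s in Set.Ioc t₁ t₂,
          ∑' n : ℤ, (Lam * u s n - 1 / 2 * u s n * Real.log (u s n ^ 2)) * v s n := by
    calc Wkg (fun n => u t₂ n) - Wkg (fun n => u t₁ n)
        = ∑' n : ℤ, (((Lam / 2 + 1 / 4) * u t₂ n ^ 2
              - (1 / 4) * (u t₂ n ^ 2 * Real.log (u t₂ n ^ 2)))
            - ((Lam / 2 + 1 / 4) * u t₁ n ^ 2
              - (1 / 4) * (u t₁ n ^ 2 * Real.log (u t₁ n ^ 2)))) := by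
          rw [Wkg_eq (u t₂), Wkg_eq (u t₁),
            Summable.tsum_sub (summableW (u t₂) (hlog t₂ ht₂)) (summableW (u t₁) (hlog t₁ ht₁))]
      _ = ∑' n : ℤ, ∫ s in Set.Ioc t₁ t₂,
            (Lam * u s n - 1 / 2 * u s n * Real.log (u s n ^ 2)) * v s n :=
          tsum_congr fun n => ftc3 u v hud hucont hvcont ht₁ hle n
      _ = ∫ s in Set.Ioc t₁ t₂,
            ∑' n : ℤ, (Lam * u s n - 1 / 2 * u s n * Real.log (u s n ^ 2)) * v s n :=
          (MeasureTheory.integral_tsum hmeas3 (fin_of_bound hmeas3 hbd3)).symm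
  have hT : Tkg (fun n => u t₂ n) - Tkg (fun n => u t₁ n)
      = ∫ s in Set.Ioc t₁ t₂,
          ∑' p : ℤ × ℤ, (-(1/2) * Kf p) * (v s p.1 * u s p.2 + u s p.1 * v s p.2) := by
    calc Tkg (fun n => u t₂ n) - Tkg (fun n => u t₁ n)
        = ∑' p : ℤ × ℤ, ((-(1/2) * Kf p) * (u t₂ p.1 * u t₂ p.2)
            - (-(1/2) * Kf p) * (u t₁ p.1 * u t₁ p.2)) := by
          rw [Tkg_eq (u t₂), Tkg_eq (u t₁), Summable.tsum_sub (summableT (u t₂)) (summableT (u t₁))]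
      _ = ∑' p : ℤ × ℤ, ∫ s in Set.Ioc t₁ t₂,
            (-(1/2) * Kf p) * (v s p.1 * u s p.2 + u s p.1 * v s p.2) :=
          tsum_congr fun p => ftc2 u v hud hucont hvcont ht₁ hle p
      _ = ∫ s in Set.Ioc t₁ t₂,
            ∑' p : ℤ × ℤ, (-(1/2) * Kf p) * (v s p.1 * u s p.2 + u s p.1 * v s p.2) :=
          (MeasureTheory.integral_tsum hmeas2 (fin_of_bound hmeas2 hbd2)).symm
  have hV := claimA v w hvd hvcont hwcont ht₁ hle
  -- integrability of the three integrands
  have hint1 : Integrable (fun s => (inner ℝ (w s) (v s) : ℝ))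
      (volume.restrict (Set.Ioc t₁ t₂)) :=
    (((hwcont.mono hJI).inner (hvcont.mono hJI)).integrableOn_Icc).mono_set
      Set.Ioc_subset_Icc_self
  have hint2 : Integrable (fun s =>
      ∑' p : ℤ × ℤ, (-(1/2) * Kf p) * (v s p.1 * u s p.2 + u s p.1 * v s p.2))
      (volume.restrict (Set.Ioc t₁ t₂)) := integrable_of_bound hmeas2 hbd2
  have hint3 : Integrable (fun s =>
      ∑' n : ℤ, (Lam * u s n - 1 / 2 * u s n * Real.log (u s n ^ 2)) * v s n)
      (volume.restrict (Set.Ioc t₁ t₂)) := integrable_of_bound hmeas3 hbd3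
  -- the sum of the three integrals vanishes
  have hzero : (∫ s in Set.Ioc t₁ t₂, (inner ℝ (w s) (v s) : ℝ))
      + (∫ s in Set.Ioc t₁ t₂,
          ∑' p : ℤ × ℤ, (-(1/2) * Kf p) * (v s p.1 * u s p.2 + u s p.1 * v s p.2))
      + (∫ s in Set.Ioc t₁ t₂,
          ∑' n : ℤ, (Lam * u s n - 1 / 2 * u s n * Real.log (u s n ^ 2)) * v s n) = 0 := by
    have hint12 : Integrable (fun s => (inner ℝ (w s) (v s) : ℝ)
        + (∑' p : ℤ × ℤ, (-(1/2) * Kf p) * (v s p.1 * u s p.2 + u s p.1 * v s p.2)))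
        (volume.restrict (Set.Ioc t₁ t₂)) := hint1.add hint2
    have e0 : ∫ s in Set.Ioc t₁ t₂, ((inner ℝ (w s) (v s) : ℝ)
        + (∑' p : ℤ × ℤ, (-(1/2) * Kf p) * (v s p.1 * u s p.2 + u s p.1 * v s p.2))
        + (∑' n : ℤ, (Lam * u s n - 1 / 2 * u s n * Real.log (u s n ^ 2)) * v s n))
        = ∫ s in Set.Ioc t₁ t₂, (0:ℝ) := by
      refine MeasureTheory.setIntegral_congr_fun measurableSet_Ioc fun s hs => ?_
      exact pointD (u s) (v s) (w s) (heq' s (hIocI hs))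
    have e1 : ∫ s in Set.Ioc t₁ t₂, ((inner ℝ (w s) (v s) : ℝ)
        + (∑' p : ℤ × ℤ, (-(1/2) * Kf p) * (v s p.1 * u s p.2 + u s p.1 * v s p.2))
        + (∑' n : ℤ, (Lam * u s n - 1 / 2 * u s n * Real.log (u s n ^ 2)) * v s n))
        = (∫ s in Set.Ioc t₁ t₂, ((inner ℝ (w s) (v s) : ℝ)
          + (∑' p : ℤ × ℤ, (-(1/2) * Kf p) * (v s p.1 * u s p.2 + u s p.1 * v s p.2))))
          + ∫ s in Set.Ioc t₁ t₂,
              ∑' n : ℤ, (Lam * u s n - 1 / 2 * u s n * Real.log (u s n ^ 2)) * v s n :=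
      MeasureTheory.integral_add hint12 hint3
    have e2 : ∫ s in Set.Ioc t₁ t₂, ((inner ℝ (w s) (v s) : ℝ)
        + (∑' p : ℤ × ℤ, (-(1/2) * Kf p) * (v s p.1 * u s p.2 + u s p.1 * v s p.2)))
        = (∫ s in Set.Ioc t₁ t₂, (inner ℝ (w s) (v s) : ℝ))
          + ∫ s in Set.Ioc t₁ t₂,
              ∑' p : ℤ × ℤ, (-(1/2) * Kf p) * (v s p.1 * u s p.2 + u s p.1 * v s p.2) :=
      MeasureTheory.integral_add hint1 hint2
    have e3 := e0.symm.trans (e1.trans (by rw [e2]))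
    rw [MeasureTheory.integral_zero] at e3
    linarith
  linarith

/-- Conservation of the Klein–Gordon energy
`E_{KG}(u, u̇) = (1/2)‖u̇‖² + T(u) + W(u)` along twice continuously
differentiable `ℓ²(ℤ,ℝ)`-valued solutions of the discrete Klein–Gordon lattice
equation on `[0, ∞)`, assuming the nonlinearity `(u_n ln (u_n²))_n` lies in
`ℓ²` for each time. -/
theorem kg_energy_conservation
    (u : ℝ → lp (fun _ : ℤ => ℝ) 2)
    (hu : ContDiffOn ℝ 2 u (Set.Ici 0))
    (hlog : ∀ t ∈ Set.Ici (0 : ℝ),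
      Memℓp (fun n : ℤ => u t n * Real.log ((u t n) ^ 2)) 2)
    (heq : ∀ t ∈ Set.Ici (0 : ℝ), ∀ n : ℤ,
      derivWithin (fun s => derivWithin u (Set.Ici 0) s) (Set.Ici 0) t n
        = (∑' m : ℤ, Real.exp (-|(n : ℝ) - (m : ℝ)|) * u t m)
          - (Lam - (1 / 2) * Real.log ((u t n) ^ 2)) * u t n) :
    ∀ t₁ ∈ Set.Ici (0 : ℝ), ∀ t₂ ∈ Set.Ici (0 : ℝ),
      (1 / 2) * ‖derivWithin u (Set.Ici 0) t₁‖ ^ 2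
          + Tkg (fun n => u t₁ n) + Wkg (fun n => u t₁ n)
        = (1 / 2) * ‖derivWithin u (Set.Ici 0) t₂‖ ^ 2
            + Tkg (fun n => u t₂ n) + Wkg (fun n => u t₂ n) := by
  intro t₁ ht₁ t₂ ht₂
  have hUD : UniqueDiffOn ℝ (Set.Ici (0:ℝ)) := uniqueDiffOn_Ici 0
  have hvC1 : ContDiffOn ℝ 1 (derivWithin u (Set.Ici 0)) (Set.Ici 0) :=
    hu.derivWithin hUD (by norm_num)
  have hud : ∀ t ∈ Set.Ici (0:ℝ),
      HasDerivWithinAt u (derivWithin u (Set.Ici 0) t) (Set.Ici 0) t :=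
    fun t ht => (hu.differentiableOn two_ne_zero t ht).hasDerivWithinAt
  have hvd : ∀ t ∈ Set.Ici (0:ℝ),
      HasDerivWithinAt (derivWithin u (Set.Ici 0))
        (derivWithin (derivWithin u (Set.Ici 0)) (Set.Ici 0) t) (Set.Ici 0) t :=
    fun t ht => ((hvC1.differentiableOn one_ne_zero) t ht).hasDerivWithinAt
  have hwcont : ContinuousOn (derivWithin (derivWithin u (Set.Ici 0)) (Set.Ici 0))
      (Set.Ici 0) := (hvC1.derivWithin (m := 0) hUD (by norm_num)).continuousOn
  have heqn : ∀ t ∈ Set.Ici (0:ℝ), ∀ n : ℤ,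
      derivWithin (derivWithin u (Set.Ici 0)) (Set.Ici 0) t n
        = (∑' m : ℤ, Real.exp (-|(n : ℝ) - (m : ℝ)|) * u t m)
          - (Lam - (1 / 2) * Real.log ((u t n) ^ 2)) * u t n := heq
  rcases le_total t₁ t₂ with h | h
  · exact kg_aux u (derivWithin u (Set.Ici 0))
      (derivWithin (derivWithin u (Set.Ici 0)) (Set.Ici 0))
      hud hvd hu.continuousOn hvC1.continuousOn hwcont hlog heqn ht₁ ht₂ h
  · exact (kg_aux u (derivWithin u (Set.Ici 0))
      (derivWithin (derivWithin u (Set.Ici 0)) (Set.Ici 0))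
      hud hvd hu.continuousOn hvC1.continuousOn hwcont hlog heqn ht₂ ht₁ h).symm
end

section
/- Define the symmetric operator A on ℓ²(ℤ, ℝ) by (Au)_n = −∑_{m∈ℤ} exp(−|n−m|) u_m + |n| u_n + π_n ∑_{m∈ℤ} π_m u_m, where π_n = exp(−|n|). Let v⁺_n = exp(−n) for n ≥ 1 and v⁺_n = 0 for n ≤ 0; let v⁻_n = v⁺_{−n}; let v⁰_n = δ_{n,0}. Then A v⁺ = 0, A v⁻ = 0, and A v⁰ = 0; in particular π = v⁺ + v⁻ + v⁰ lies in the kernel of A. -/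
/-- The symmetric operator
`(Au)_n = -∑_{m∈ℤ} exp (-|n-m|) u_m + |n| u_n + π_n ∑_{m∈ℤ} π_m u_m`. -/
noncomputable def Aop (u : ℤ → ℝ) (n : ℤ) : ℝ :=
  -(∑' m : ℤ, Real.exp (-|(n : ℝ) - (m : ℝ)|) * u m) + |(n : ℝ)| * u n
    + pk n * ∑' m : ℤ, pk m * u m

/-- `v⁺_n = exp (-n)` for `n ≥ 1` and `v⁺_n = 0` for `n ≤ 0`. -/
noncomputable def vplus (n : ℤ) : ℝ := if 1 ≤ n then Real.exp (-(n : ℝ)) else 0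

/-- `v⁻_n = v⁺_{-n}`. -/
noncomputable def vminus (n : ℤ) : ℝ := vplus (-n)

/-- `v⁰_n = δ_{n,0}`. -/
def vzero (n : ℤ) : ℝ := if n = 0 then 1 else 0

/-!
`A` is additive on summable sequences and commutes with the reflection `n ↦ -n`, which swaps
`v⁺` and `v⁻`, so it suffices to treat `v⁺` and `v⁰`. For `v⁰` the three terms of `(A v⁰)_n` are
`-π_n`, `0` and `π_n π_0`. For `v⁺`, split the convolution `∑_{m ≥ 1} e^{-|n-m|} e^{-m}` at
`m = n`: each term with `1 ≤ m ≤ n` equals `e^{-n}`, giving `|n| v⁺_n`, and the terms with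
`m > max n 0` add up to `π_n ∑_{k ≥ 1} e^{-2k} = π_n ∑_m π_m v⁺_m`, the last term of `A`.
-/

open Real

lemma summable_mul_of_abs_le_one {ι : Type*} {f u : ι → ℝ} (hf : ∀ i, |f i| ≤ 1)
    (hu : Summable u) : Summable fun i => f i * u i :=
  hu.abs.of_norm_bounded fun i => by
    rw [Real.norm_eq_abs, abs_mul]
    exact mul_le_of_le_one_left (abs_nonneg _) (hf i)

lemma abs_exp_neg_abs_le_one (x : ℝ) : |exp (-|x|)| ≤ 1 := by
  rw [abs_of_pos (exp_pos _)]
  exact exp_le_one_iff.mpr (neg_nonpos.mpr (abs_nonneg x))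

lemma Aop_add {u v : ℤ → ℝ} (hu : Summable u) (hv : Summable v) (n : ℤ) :
    Aop (u + v) n = Aop u n + Aop v n := by
  have hK := fun m : ℤ => abs_exp_neg_abs_le_one ((n : ℝ) - m)
  have hpk := fun m : ℤ => abs_exp_neg_abs_le_one (m : ℝ)
  unfold Aop
  simp only [Pi.add_apply, mul_add]
  rw [(summable_mul_of_abs_le_one hK hu).tsum_add (summable_mul_of_abs_le_one hK hv),
    (summable_mul_of_abs_le_one (f := pk) hpk hu).tsum_add
      (summable_mul_of_abs_le_one (f := pk) hpk hv)]
  ring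

lemma pk_neg (n : ℤ) : pk (-n) = pk n := by
  simp only [pk, Int.cast_neg, abs_neg]

lemma Aop_comp_neg (u : ℤ → ℝ) (n : ℤ) : Aop (fun m => u (-m)) n = Aop u (-n) := by
  unfold Aop
  rw [← (Equiv.neg ℤ).tsum_eq (fun m => exp (-|(n : ℝ) - m|) * u (-m)),
    ← (Equiv.neg ℤ).tsum_eq (fun m => pk m * u (-m))]
  have h : ∀ m : ℝ, |-(n : ℝ) - m| = |(n : ℝ) - -m| := fun m => by
    rw [← abs_neg]; ring_nf
  simp only [Equiv.neg_apply, neg_neg, pk_neg, Int.cast_neg, abs_neg, h]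

lemma summable_pk : Summable pk := by
  refine Summable.of_nat_of_neg ?_ ?_ <;>
    simpa [pk, Function.comp_def] using summable_exp_neg_nat

lemma vplus_nonneg (n : ℤ) : 0 ≤ vplus n := by
  unfold vplus; split_ifs <;> positivity

lemma vminus_nonneg (n : ℤ) : 0 ≤ vminus n := vplus_nonneg (-n)

lemma vzero_nonneg (n : ℤ) : 0 ≤ vzero n := by
  unfold vzero; split_ifs <;> norm_num

lemma vplus_add_vminus_add_vzero (n : ℤ) : vplus n + vminus n + vzero n = pk n := by
  unfold vminus vplus vzero pk
  rcases lt_trichotomy n 0 with h | rfl | h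
  · rw [if_neg (by omega), if_pos (by omega), if_neg h.ne, abs_of_neg (by exact_mod_cast h)]
    push_cast; ring
  · norm_num
  · rw [if_pos (by omega), if_neg (by omega), if_neg h.ne', abs_of_pos (by exact_mod_cast h)]
    ring

lemma summable_vplus : Summable vplus :=
  summable_pk.of_nonneg_of_le vplus_nonneg fun n => by
    linarith [vplus_add_vminus_add_vzero n, vminus_nonneg n, vzero_nonneg n]

lemma summable_vminus : Summable vminus :=
  summable_pk.of_nonneg_of_le vminus_nonneg fun n => by
    linarith [vplus_add_vminus_add_vzero n, vplus_nonneg n, vzero_nonneg n]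

lemma summable_vzero : Summable vzero :=
  summable_pk.of_nonneg_of_le vzero_nonneg fun n => by
    linarith [vplus_add_vminus_add_vzero n, vplus_nonneg n, vminus_nonneg n]

lemma summable_exp_neg_succ : Summable fun k : ℕ => exp (-(k + 1 : ℝ)) := by
  simpa using (summable_nat_add_iff 1).mpr summable_exp_neg_nat

lemma tsum_mul_vplus (f : ℤ → ℝ) :
    ∑' m, f m * vplus m = ∑' k : ℕ, f (k + 1) * exp (-(k + 1 : ℝ)) := by
  have hinj : Function.Injective fun k : ℕ => (k : ℤ) + 1 := fun a b h => by simpa using h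
  have hsupp :
      Function.support (fun m => f m * vplus m) ⊆ Set.range fun k : ℕ => (k : ℤ) + 1 := by
    intro m hm
    by_cases h : 1 ≤ m
    · exact ⟨(m - 1).toNat, by dsimp only; omega⟩
    · simp [vplus, h] at hm
  rw [← hinj.tsum_eq hsupp]
  refine tsum_congr fun k => ?_
  simp [vplus]

lemma Aop_vzero (n : ℤ) : Aop vzero n = 0 := by
  unfold Aop vzero
  simp only [mul_ite, mul_one, mul_zero, tsum_ite_eq]
  by_cases h : n = 0 <;> simp [h, pk]

lemma tsum_exp_abs_sub_succ_of_nonpos {x : ℝ} (hx : x ≤ 0) :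
    ∑' k : ℕ, exp (-|x - (k + 1)|) * exp (-(k + 1 : ℝ))
      = exp x * ∑' k : ℕ, exp (-(k + 1 : ℝ)) * exp (-(k + 1 : ℝ)) := by
  rw [← tsum_mul_left]
  refine tsum_congr fun k => ?_
  rw [abs_of_nonpos (by linarith), ← exp_add, ← exp_add, ← exp_add]
  ring_nf

lemma tsum_exp_abs_natCast_sub_succ (N : ℕ) :
    ∑' k : ℕ, exp (-|(N : ℝ) - (k + 1)|) * exp (-(k + 1 : ℝ))
      = N * exp (-N) + exp (-N) * ∑' k : ℕ, exp (-(k + 1 : ℝ)) * exp (-(k + 1 : ℝ)) := by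
  have hsum : Summable fun k : ℕ => exp (-|(N : ℝ) - (k + 1)|) * exp (-(k + 1 : ℝ)) :=
    summable_mul_of_abs_le_one (fun k => abs_exp_neg_abs_le_one _) summable_exp_neg_succ
  have hhead : ∀ k ∈ Finset.range N, exp (-|(N : ℝ) - (k + 1)|) * exp (-(k + 1 : ℝ))
      = exp (-N) := fun k hk => by
    have : (k + 1 : ℝ) ≤ N := by exact_mod_cast Finset.mem_range.mp hk
    rw [abs_of_nonneg (by linarith), ← exp_add]
    ring_nf
  have htail : ∀ i : ℕ, exp (-|(N : ℝ) - ((i + N : ℕ) + 1)|) * exp (-((i + N : ℕ) + 1 : ℝ))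
      = exp (-N) * (exp (-(i + 1 : ℝ)) * exp (-(i + 1 : ℝ))) := fun i => by
    push_cast
    rw [abs_of_nonpos (by linarith [(i.cast_nonneg : (0 : ℝ) ≤ i)]), ← exp_add, ← exp_add,
      ← exp_add]
    ring_nf
  rw [← hsum.sum_add_tsum_nat_add N, Finset.sum_congr rfl hhead, tsum_congr htail,
    tsum_mul_left, Finset.sum_const, Finset.card_range, nsmul_eq_mul]

lemma tsum_exp_abs_sub_mul_vplus (n : ℤ) :
    ∑' m : ℤ, exp (-|(n : ℝ) - m|) * vplus m
      = |(n : ℝ)| * vplus n + pk n * ∑' m : ℤ, pk m * vplus m := by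
  have hpk : ∀ k : ℕ, pk (k + 1) = exp (-(k + 1 : ℝ)) := fun k => by
    simp only [pk]; push_cast; rw [abs_of_nonneg (by positivity)]
  rw [tsum_mul_vplus, tsum_mul_vplus]
  simp only [hpk]
  push_cast
  rcases le_or_gt n 0 with hn | hn
  · have hn' : (n : ℝ) ≤ 0 := by exact_mod_cast hn
    rw [tsum_exp_abs_sub_succ_of_nonpos hn', vplus, if_neg (by omega), pk, abs_of_nonpos hn',
      neg_neg, mul_zero, zero_add]
  · obtain ⟨N, rfl⟩ := Int.eq_ofNat_of_zero_le hn.le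
    push_cast
    rw [tsum_exp_abs_natCast_sub_succ, vplus, if_pos (by omega), pk, Int.cast_natCast,
      abs_of_nonneg N.cast_nonneg]

lemma Aop_vplus (n : ℤ) : Aop vplus n = 0 := by
  rw [Aop, tsum_exp_abs_sub_mul_vplus]
  ring

lemma Aop_vminus (n : ℤ) : Aop vminus n = 0 :=
  (Aop_comp_neg vplus n).trans (Aop_vplus (-n))

/-- The vectors `v⁺`, `v⁻`, `v⁰` lie in the kernel of `A`; in particular
`π = v⁺ + v⁻ + v⁰` lies in the kernel of `A`. -/
theorem kernel_of_A :
    (∀ n : ℤ, Aop vplus n = 0) ∧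
    (∀ n : ℤ, Aop vminus n = 0) ∧
    (∀ n : ℤ, Aop vzero n = 0) ∧
    (∀ n : ℤ, vplus n + vminus n + vzero n = pk n) ∧
    (∀ n : ℤ, Aop (fun m => vplus m + vminus m + vzero m) n = 0) := by
  refine ⟨Aop_vplus, Aop_vminus, Aop_vzero, vplus_add_vminus_add_vzero, fun n => ?_⟩
  change Aop (vplus + vminus + vzero) n = 0
  rw [Aop_add (u := vplus + vminus) (summable_vplus.add summable_vminus) summable_vzero,
    Aop_add summable_vplus summable_vminus, Aop_vplus, Aop_vminus, Aop_vzero]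
  norm_num
end
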